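/- arXiv:math/0510621 — 9 statements merged into one kernel-verified Lean document; each statement's English description precedes it below -/
import Mathlib

section
/- For the even cycle C_{2k}, the pebbling number equals 2^k. -/
open SimpleGraph

variable {V : Type*}

/-- Apply a pebbling move along the ordered pair `e`. -/
def applyMove [DecidableEq V] (D : V → ℕ) (e : V × V) : V → ℕ :=
  fun w => if w = e.1 then D w - 2 else if w = e.2 then D w + 1 else D w

/-- A list of ordered pairs is a valid pebbling sequence from `D`. -/
def ValidSeq [DecidableEq V] (G : SimpleGraph V) : (V → ℕ) → List (V × V) → Prop
  | _, [] => True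
  | D, e :: l => G.Adj e.1 e.2 ∧ 2 ≤ D e.1 ∧ ValidSeq G (applyMove D e) l

def applySeq [DecidableEq V] (D : V → ℕ) : List (V × V) → (V → ℕ)
  | [] => D
  | e :: l => applySeq (applyMove D e) l

/-- `r` is `m`-reachable under `D`. -/
def Reaches [DecidableEq V] (G : SimpleGraph V) (D : V → ℕ) (r : V) (m : ℕ) : Prop :=
  ∃ l : List (V × V), ValidSeq G D l ∧ m ≤ applySeq D l r

def Solvable [DecidableEq V] (G : SimpleGraph V) (D : V → ℕ) : Prop :=
  ∀ r : V, Reaches G D r 1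

noncomputable def pebNumTo [Fintype V] [DecidableEq V] (G : SimpleGraph V) (r : V) : ℕ :=
  sInf {k : ℕ | ∀ D : V → ℕ, (∑ v, D v) = k → Reaches G D r 1}

noncomputable def pebNum [Fintype V] [DecidableEq V] (G : SimpleGraph V) : ℕ :=
  sInf {k : ℕ | ∀ D : V → ℕ, (∑ v, D v) = k → Solvable G D}

noncomputable def optPebNum [Fintype V] [DecidableEq V] (G : SimpleGraph V) : ℕ :=
  sInf {k : ℕ | ∃ D : V → ℕ, (∑ v, D v) = k ∧ Solvable G D}

/-!
Upper bound: the two arcs of length `k` from a target `r` to its antipode cover the cycle.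
Counting a pebble at distance `i` from `r` along an arc with weight `2 ^ (k - i)`, the two arc
potentials add up to at least twice the number of pebbles, so with `2 ^ k` pebbles one arc has
potential at least `2 ^ k`, and greedily moving pebbles down that arc puts one on `r`.

Lower bound: weight a pebble at cycle distance `d` from `0` by `2 ^ (k - d)`. No move increases
the weighted count, which is below `2 ^ k` for fewer than `2 ^ k` pebbles on the antipode of `0`,
while a pebble on `0` alone has weight `2 ^ k`.
-/

open Finset

section Moves

variable [DecidableEq V] {G : SimpleGraph V}

lemma applyMove_apply_fst (D : V → ℕ) (a b : V) : applyMove D (a, b) a = D a - 2 := by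
  simp [applyMove]

lemma applyMove_apply_snd {a b : V} (hab : a ≠ b) (D : V → ℕ) :
    applyMove D (a, b) b = D b + 1 := by
  simp [applyMove, hab.symm]

lemma applyMove_apply_of_ne {a b w : V} (ha : w ≠ a) (hb : w ≠ b) (D : V → ℕ) :
    applyMove D (a, b) w = D w := by
  simp [applyMove, ha, hb]

lemma reaches_of_le {D : V → ℕ} {r : V} {m : ℕ} (h : m ≤ D r) : Reaches G D r m :=
  ⟨[], trivial, h⟩

lemma Reaches.of_applyMove {D : V → ℕ} {a b r : V} {m : ℕ} (hab : G.Adj a b) (ha : 2 ≤ D a)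
    (h : Reaches G (applyMove D (a, b)) r m) : Reaches G D r m := by
  obtain ⟨l, hl, hr⟩ := h
  exact ⟨(a, b) :: l, ⟨hab, ha, hl⟩, hr⟩

end Moves

section Weight

variable [Fintype V] [DecidableEq V] {G : SimpleGraph V}

lemma sum_applyMove_mul_add {D : V → ℕ} {a b : V} (hab : a ≠ b) (ha : 2 ≤ D a) (w : V → ℕ) :
    ∑ v, applyMove D (a, b) v * w v + 2 * w a = ∑ v, D v * w v + w b := by
  have key : ∀ v, applyMove D (a, b) v * w v + (if v = a then 2 * w a else 0)
      = D v * w v + (if v = b then w b else 0) := by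
    intro v
    by_cases hva : v = a
    · subst hva
      simp only [applyMove_apply_fst, if_pos, if_neg hab]
      rw [Nat.sub_mul]
      have : 2 * w v ≤ D v * w v := Nat.mul_le_mul_right _ ha
      omega
    by_cases hvb : v = b
    · subst hvb
      simp [applyMove_apply_snd hab, hva, add_mul]
    · simp [applyMove_apply_of_ne hva hvb, hva, hvb]
  simpa [sum_add_distrib] using sum_congr (s₁ := univ) rfl fun v _ => key v

lemma sum_applySeq_mul_le {w : V → ℕ} (hw : ∀ a b, G.Adj a b → w b ≤ 2 * w a) :
    ∀ {D : V → ℕ} {l : List (V × V)}, ValidSeq G D l →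
      ∑ v, applySeq D l v * w v ≤ ∑ v, D v * w v
  | _, [], _ => le_rfl
  | D, (a, b) :: l, ⟨hab, ha, hl⟩ => by
    have hmove : ∑ v, applyMove D (a, b) v * w v + 2 * w a = ∑ v, D v * w v + w b :=
      sum_applyMove_mul_add hab.ne ha w
    have hab' : w b ≤ 2 * w a := hw a b hab
    exact (sum_applySeq_mul_le hw hl).trans (by omega)

lemma Reaches.mul_le_sum_mul {w : V → ℕ} (hw : ∀ a b, G.Adj a b → w b ≤ 2 * w a)
    {D : V → ℕ} {r : V} {m : ℕ} (h : Reaches G D r m) : m * w r ≤ ∑ v, D v * w v := by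
  obtain ⟨l, hl, hr⟩ := h
  calc m * w r ≤ applySeq D l r * w r := Nat.mul_le_mul_right _ hr
    _ ≤ ∑ v, applySeq D l v * w v :=
      single_le_sum (f := fun v => applySeq D l v * w v) (fun _ _ => Nat.zero_le _)
        (mem_univ r)
    _ ≤ ∑ v, D v * w v := sum_applySeq_mul_le hw hl

lemma not_reaches_single_of_lt_two_pow {f : V → ℕ} (hf : ∀ a b, G.Adj a b → f a ≤ f b + 1)
    {x r : V} {j : ℕ} (hj : j < 2 ^ (f x - f r)) : ¬ Reaches G (Pi.single x j) r 1 := by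
  intro h
  have hw : ∀ a b, G.Adj a b → 2 ^ (f x - f b) ≤ 2 * 2 ^ (f x - f a) := by
    intro a b hab
    rw [← pow_succ']
    exact Nat.pow_le_pow_right two_pos (by have := hf a b hab; omega)
  have := h.mul_le_sum_mul hw
  simp [Pi.single_apply] at this
  omega

end Weight

section Path

/-- The pebbles on `u 0, …, u n`, each counted with the fraction of a pebble it can carry to
`u 0`, scaled by `2 ^ n`. -/
def pathPotential (D : V → ℕ) (u : ℕ → V) (n : ℕ) : ℕ :=
  ∑ i ∈ range (n + 1), D (u i) * 2 ^ (n - i)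

lemma pathPotential_zero (D : V → ℕ) (u : ℕ → V) : pathPotential D u 0 = D (u 0) := by
  simp [pathPotential]

lemma pathPotential_succ (D : V → ℕ) (u : ℕ → V) (n : ℕ) :
    pathPotential D u (n + 1) = 2 * pathPotential D u n + D (u (n + 1)) := by
  rw [pathPotential, pathPotential, sum_range_succ, mul_sum, Nat.sub_self,
    pow_zero, mul_one]
  congr 1
  refine sum_congr rfl fun i hi => ?_
  rw [mem_range] at hi
  rw [Nat.sub_add_comm (by omega), pow_succ]
  ring

lemma pathPotential_congr {D D' : V → ℕ} {u : ℕ → V} {n : ℕ} (h : ∀ i ≤ n, D' (u i) = D (u i)) :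
    pathPotential D' u n = pathPotential D u n :=
  sum_congr rfl fun i hi => by rw [h i (by simpa [Nat.lt_succ_iff] using hi)]

lemma two_mul_sum_add_le_pathPotential (D : V → ℕ) (u : ℕ → V) (n : ℕ) :
    2 * ∑ i ∈ range n, D (u i) + D (u n) ≤ pathPotential D u n := by
  induction n with
  | zero => simp [pathPotential_zero]
  | succ n ih =>
    rw [pathPotential_succ, sum_range_succ]
    omega

variable [DecidableEq V] {G : SimpleGraph V}

lemma pathPotential_applyMove {D : V → ℕ} {u : ℕ → V} {n : ℕ}
    (hu : Set.InjOn u (Set.Iic (n + 1))) (h2 : 2 ≤ D (u (n + 1))) :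
    pathPotential (applyMove D (u (n + 1), u n)) u (n + 1) = pathPotential D u (n + 1) := by
  have hne : ∀ i ≤ n + 1, ∀ j ≤ n + 1, i ≠ j → u i ≠ u j := fun i hi j hj hij h =>
    hij (hu (Set.mem_Iic.2 hi) (Set.mem_Iic.2 hj) h)
  have hlast : applyMove D (u (n + 1), u n) (u n) = D (u n) + 1 :=
    applyMove_apply_snd (hne _ le_rfl _ (by omega) (by omega)) D
  rw [pathPotential_succ, pathPotential_succ, applyMove_apply_fst]
  cases n with
  | zero => rw [pathPotential_zero, pathPotential_zero, hlast]; omega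
  | succ n =>
    rw [pathPotential_succ, pathPotential_succ, hlast,
      pathPotential_congr (u := u) fun i hi =>
        applyMove_apply_of_ne (hne _ (by omega) _ le_rfl (by omega))
          (hne _ (by omega) _ (by omega) (by omega)) D]
    omega

lemma reaches_of_two_pow_le_pathPotential {u : ℕ → V} {n : ℕ}
    (hadj : ∀ i < n, G.Adj (u (i + 1)) (u i)) (hu : Set.InjOn u (Set.Iic n)) {D : V → ℕ}
    (hD : 2 ^ n ≤ pathPotential D u n) : Reaches G D (u 0) 1 := by
  induction n generalizing D with
  | zero => exact reaches_of_le (by simpa [pathPotential_zero] using hD)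
  | succ n ih =>
    induction hm : D (u (n + 1)) using Nat.strong_induction_on generalizing D with
    | _ m ihm =>
      by_cases h2 : 2 ≤ D (u (n + 1))
      · refine Reaches.of_applyMove (hadj n n.lt_succ_self) h2 (ihm (m - 2) (by omega) ?_ ?_)
        · rwa [pathPotential_applyMove hu h2]
        · rw [applyMove_apply_fst, hm]
      · refine ih (fun i hi => hadj i (by omega)) (hu.mono (Set.Iic_subset_Iic.2 n.le_succ)) ?_
        rw [pathPotential_succ, pow_succ] at hD
        omega

end Path

lemma pebNum_eq_of_forall_solvable [Fintype V] [DecidableEq V] {G : SimpleGraph V} {p : ℕ}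
    (hsolv : ∀ D : V → ℕ, ∑ v, D v = p → Solvable G D)
    (hunsolv : ∀ j < p, ∃ D : V → ℕ, ∑ v, D v = j ∧ ¬ Solvable G D) : pebNum G = p := by
  refine IsLeast.csInf_eq ⟨hsolv, fun j hj => not_lt.1 fun hlt => ?_⟩
  obtain ⟨D, hD, hD'⟩ := hunsolv j hlt
  exact hD' (hj D hD)

section Cycle

open Fin.NatCast Fin.CommRing

/-- The distance from `0` in `cycleGraph n`. -/
def cycleDist {n : ℕ} (x : Fin n) : ℕ := min x.val (n - x.val)

lemma cycleDist_le_of_adj {n : ℕ} {a b : Fin n} (h : (cycleGraph n).Adj a b) :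
    cycleDist a ≤ cycleDist b + 1 := by
  have ha := a.isLt
  have hb := b.isLt
  rw [cycleGraph_adj'] at h
  unfold cycleDist
  rcases lt_trichotomy a b with hab | rfl | hba
  · rw [Fin.coe_sub_iff_lt.2 hab, Fin.coe_sub_iff_le.2 hab.le] at h
    omega
  · omega
  · rw [Fin.coe_sub_iff_le.2 hba.le, Fin.coe_sub_iff_lt.2 hba] at h
    omega

variable {n : ℕ} [NeZero n]

lemma cycleGraph_adj_add_one (hn : 2 ≤ n) (x : Fin n) : (cycleGraph n).Adj (x + 1) x := by
  rw [cycleGraph_adj', add_sub_cancel_left, Fin.val_one', Nat.mod_eq_of_lt hn]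
  exact Or.inl rfl

lemma Fin.natCast_injOn_Iio : Set.InjOn (fun i : ℕ => (i : Fin n)) (Set.Iio n) :=
  fun i hi j hj h => by simpa [Nat.mod_eq_of_lt hi, Nat.mod_eq_of_lt hj] using congrArg Fin.val h

lemma sum_eq_sum_range_add_sum_range (D : Fin n → ℕ) (r : Fin n) {a b : ℕ} (hab : a + b = n) :
    ∑ x, D x = ∑ i ∈ range a, D (r + i) + ∑ i ∈ range b, D (r - (i + 1 : ℕ)) := by
  have hrot : ∑ x, D x = ∑ i ∈ range n, D (r + i) := by
    rw [← Fin.sum_univ_eq_sum_range (fun i => D (r + i)) n]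
    simp only [Fin.cast_val_eq_self]
    exact (Equiv.sum_comp (Equiv.addLeft r) D).symm
  subst hab
  rw [hrot, sum_range_add, ← sum_range_reflect _ b]
  congr 1
  refine sum_congr rfl fun i hi => ?_
  rw [mem_range] at hi
  congr 1
  rw [eq_sub_iff_add_eq, add_assoc, ← Nat.cast_add,
    show a + (b - 1 - i) + (i + 1) = a + b by omega, Fin.natCast_self, add_zero]

lemma two_mul_sum_le_pathPotential_add {k : ℕ} [NeZero (2 * k)] (D : Fin (2 * k) → ℕ)
    (r : Fin (2 * k)) :
    2 * ∑ x, D x ≤ pathPotential D (fun i => r + i) k + pathPotential D (fun i => r - i) k := by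
  have hsplit := sum_eq_sum_range_add_sum_range D r (two_mul k).symm
  have hshift := sum_range_succ' (fun i => D (r - i)) k
  have hlast := sum_range_succ (fun i => D (r - i)) k
  have hanti : r + (k : Fin (2 * k)) = r - k := by
    rw [eq_sub_iff_add_eq, add_assoc, ← Nat.cast_add, ← two_mul, Fin.natCast_self, add_zero]
  have hfwd := two_mul_sum_add_le_pathPotential D (fun i => r + i) k
  have hbwd := two_mul_sum_add_le_pathPotential D (fun i => r - i) k
  simp only [Nat.cast_zero, sub_zero] at hshift hfwd
  rw [hanti] at hfwd
  omega

lemma solvable_cycleGraph_of_two_pow_le_sum {k : ℕ} (hk : 1 ≤ k) {D : Fin (2 * k) → ℕ}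
    (hD : 2 ^ k ≤ ∑ x, D x) : Solvable (cycleGraph (2 * k)) D := by
  have : NeZero (2 * k) := ⟨by omega⟩
  intro r
  have hinj : ∀ i ≤ k, ∀ j ≤ k, (i : Fin (2 * k)) = j → i = j := fun i hi j hj =>
    Fin.natCast_injOn_Iio (Set.mem_Iio.2 (by omega)) (Set.mem_Iio.2 (by omega))
  have hpot := two_mul_sum_le_pathPotential_add D r
  have hfwd : ∀ i < k, (cycleGraph (2 * k)).Adj (r + ((i + 1 : ℕ) : Fin (2 * k))) (r + i) :=
    fun i _ => by simpa [add_assoc] using cycleGraph_adj_add_one (by omega) (r + (i : Fin (2 * k)))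
  have hbwd : ∀ i < k, (cycleGraph (2 * k)).Adj (r - ((i + 1 : ℕ) : Fin (2 * k))) (r - i) := by
    intro i _
    have := (cycleGraph_adj_add_one (by omega) (r - ((i + 1 : ℕ) : Fin (2 * k)))).symm
    rwa [Nat.cast_succ, sub_add_eq_sub_sub, sub_add_cancel, ← sub_add_eq_sub_sub,
      ← Nat.cast_succ] at this
  rcases le_or_gt (2 ^ k) (pathPotential D (fun i => r + i) k) with h | h
  · simpa using reaches_of_two_pow_le_pathPotential hfwd
      (fun i hi j hj hij => hinj i hi j hj (add_left_cancel hij)) h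
  · simpa using reaches_of_two_pow_le_pathPotential (u := fun i => r - (i : Fin (2 * k))) hbwd
      (fun i hi j hj hij => hinj i hi j hj (sub_right_injective hij)) (by omega)

lemma exists_not_solvable_cycleGraph {k j : ℕ} (hk : 1 ≤ k) (hj : j < 2 ^ k) :
    ∃ D : Fin (2 * k) → ℕ, ∑ x, D x = j ∧ ¬ Solvable (cycleGraph (2 * k)) D := by
  have : NeZero (2 * k) := ⟨by omega⟩
  refine ⟨Pi.single (k : Fin (2 * k)) j, by simp, fun h => ?_⟩
  refine not_reaches_single_of_lt_two_pow (fun _ _ => cycleDist_le_of_adj) ?_ (h 0)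
  simpa [cycleDist, Nat.mod_eq_of_lt (show k < k + k by omega), two_mul] using hj

end Cycle

theorem pebbling_number_even_cycle (k : ℕ) (hk : 1 ≤ k) :
    pebNum (SimpleGraph.cycleGraph (2 * k)) = 2 ^ k :=
  pebNum_eq_of_forall_solvable (fun _ hD => solvable_cycleGraph_of_two_pow_le_sum hk hD.ge)
    fun _ hj => exists_not_solvable_cycleGraph hk hj
end

section
/- For the odd cycle C_{2k+1}, the pebbling number equals 2⌊2^(k+1)/3⌋ + 1. -/
open SimpleGraph

variable {V : Type*}

/-!
Give a pebble at vertex `j` of the arc `0, 1, …, m` of the cycle the weight `2 ^ (m - j)`. The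
root `0` can be reached iff on one of the arcs `0, 1, …, m` or `0, -1, …, -m` the weights add up
to at least `2 ^ m`: pebbles can then be pushed to `0` along the arc, while "every arc weighs less
than `2 ^ m`" survives every move, since a pebble entering an arc from outside costs two pebbles
just beyond its end.

On the two arcs of length `k + 1` in `C_{2k+1}` every vertex has total weight at least `3`, so a
distribution that cannot reach `0` has at most `(2 ^ (k + 2) - 2) / 3` pebbles; rotating the
root to `0` gives the upper bound. Conversely, up to `⌊2 ^ (k + 1) / 3⌋` pebbles on each end of
the edge opposite `0` cannot reach `0`.
-/

open Finset

namespace Pebbling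

section Moves

variable {W : Type*} [DecidableEq V] [DecidableEq W] {G : SimpleGraph V}

theorem Reaches.of_move {D : V → ℕ} {u v r : V} {m : ℕ} (huv : G.Adj u v) (hu : 2 ≤ D u)
    (h : Reaches G (applyMove D (u, v)) r m) : Reaches G D r m := by
  obtain ⟨l, hl, hr⟩ := h
  exact ⟨(u, v) :: l, ⟨huv, hu, hl⟩, hr⟩

theorem not_reaches_of_invariant (P : (V → ℕ) → Prop)
    (hmove : ∀ D u v, P D → G.Adj u v → 2 ≤ D u → P (applyMove D (u, v)))
    {r : V} {m : ℕ} (hroot : ∀ D, P D → D r < m) {D : V → ℕ} (hD : P D) :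
    ¬Reaches G D r m := by
  rintro ⟨l, hl, hr⟩
  induction l generalizing D with
  | nil => exact absurd hr (not_le.2 (hroot D hD))
  | cons e l ih => exact ih (hmove D e.1 e.2 hD hl.1 hl.2.1) hl.2.2 hr

theorem applyMove_apply_of_injOn {f : W → V} {s : Set W} (hf : Set.InjOn f s) (D : V → ℕ)
    {i i' j : W} (hi : i ∈ s) (hi' : i' ∈ s) (hj : j ∈ s) :
    applyMove D (f i, f i') (f j) = applyMove (D ∘ f) (i, i') j := by
  simp only [applyMove, Function.comp, hf.eq_iff hj hi, hf.eq_iff hj hi']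

theorem applyMove_comp_of_injective {f : W → V} (hf : Function.Injective f) (D : V → ℕ)
    (i i' : W) : applyMove D (f i, f i') ∘ f = applyMove (D ∘ f) (i, i') :=
  funext fun _ => applyMove_apply_of_injOn hf.injOn D (Set.mem_univ _) (Set.mem_univ _)
    (Set.mem_univ _)

theorem Reaches.of_iso {H : SimpleGraph W} (e : H ≃g G) {D : V → ℕ} {r : W} {m : ℕ}
    (h : Reaches H (D ∘ e) r m) : Reaches G D (e r) m := by
  obtain ⟨l, hl, hr⟩ := h
  suffices ∀ D : V → ℕ, ValidSeq H (D ∘ e) l →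
      ValidSeq G D (l.map (Prod.map e e)) ∧
        applySeq D (l.map (Prod.map e e)) (e r) = applySeq (D ∘ e) l r from
    ⟨_, (this D hl).1, (this D hl).2 ▸ hr⟩
  clear hl hr
  induction l with
  | nil => exact fun _ _ => ⟨trivial, rfl⟩
  | cons p l ih =>
    intro D ⟨hp, h2, hl⟩
    have hcomp := applyMove_comp_of_injective e.injective D p.1 p.2
    rw [← hcomp] at hl
    exact ⟨⟨e.map_adj_iff.2 hp, h2, (ih _ hl).1⟩, (ih _ hl).2.trans (by rw [hcomp]; rfl)⟩

theorem sum_applyMove_mul {D : V → ℕ} {u v : V} (huv : u ≠ v) (hu : 2 ≤ D u) (s : Finset V)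
    (w : V → ℕ) :
    ∑ x ∈ s, applyMove D (u, v) x * w x + (if u ∈ s then 2 * w u else 0) =
      ∑ x ∈ s, D x * w x + (if v ∈ s then w v else 0) := by
  have hpt : ∀ x ∈ s, (applyMove D (u, v) x + if x = u then 2 else 0) * w x =
      (D x + if x = v then 1 else 0) * w x := by
    intro x _
    congr 1
    by_cases hxu : x = u
    · subst hxu
      simp only [applyMove, ↓reduceIte, huv, add_zero]
      omega
    · by_cases hxv : x = v
      · subst hxv; simp [applyMove, hxu]
      · simp [applyMove, hxu, hxv]
  simpa only [add_mul, sum_add_distrib, ite_mul, zero_mul, one_mul,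
    sum_ite_eq'] using sum_congr rfl hpt

end Moves

section Line

def lineWeight (E : ℕ → ℕ) (m : ℕ) : ℕ := ∑ j ∈ range (m + 1), E j * 2 ^ (m - j)

def LineBlocked (E : ℕ → ℕ) (L : ℕ) : Prop := ∀ m ≤ L, lineWeight E m < 2 ^ m

variable {E E' : ℕ → ℕ} {m : ℕ}

@[simp] theorem lineWeight_zero : lineWeight E 0 = E 0 := by simp [lineWeight]

theorem lineWeight_succ : lineWeight E (m + 1) = 2 * lineWeight E m + E (m + 1) := by
  rw [lineWeight, sum_range_succ, Nat.sub_self, pow_zero, mul_one, lineWeight, mul_sum]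
  congr 1
  refine sum_congr rfl fun j hj => ?_
  rw [Nat.sub_add_comm (mem_range_succ_iff.1 hj), pow_succ]
  ring

theorem lineWeight_congr (h : ∀ j ≤ m, E j = E' j) : lineWeight E m = lineWeight E' m :=
  sum_congr rfl fun j hj => by rw [h j (mem_range_succ_iff.1 hj)]

theorem lineBlocked_congr {L : ℕ} (h : ∀ j ≤ L, E j = E' j) :
    LineBlocked E L ↔ LineBlocked E' L :=
  forall₂_congr fun _ hm => by rw [lineWeight_congr fun j hj => h j (hj.trans hm)]

theorem sum_range_le_lineWeight : ∑ j ∈ range (m + 1), E j ≤ lineWeight E m :=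
  sum_le_sum fun _ _ => Nat.le_mul_of_pos_right _ (Nat.two_pow_pos _)

theorem lineWeight_applyMove {u v : ℕ} (huv : u ≠ v) (hu : 2 ≤ E u) :
    lineWeight (applyMove E (u, v)) m + (if u ≤ m then 2 * 2 ^ (m - u) else 0) =
      lineWeight E m + (if v ≤ m then 2 ^ (m - v) else 0) := by
  simpa only [lineWeight, mem_range_succ_iff] using
    sum_applyMove_mul huv hu (range (m + 1)) fun j => 2 ^ (m - j)

theorem lineWeight_applyMove_succ {v : ℕ} (hu : 2 ≤ E (v + 1)) (hm : v + 1 ≤ m) :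
    lineWeight (applyMove E (v + 1, v)) m = lineWeight E m := by
  have h := lineWeight_applyMove (m := m) (by omega : v + 1 ≠ v) hu
  rw [if_pos hm, if_pos (by omega), show m - v = m - (v + 1) + 1 by omega, pow_succ] at h
  omega

theorem LineBlocked.applyMove {L u v : ℕ} (hE : LineBlocked E L) (hu : 2 ≤ E u)
    (huv : v = u + 1 ∨ u = v + 1) (huL : u ≤ L) : LineBlocked (applyMove E (u, v)) L := by
  intro m hm
  have h := lineWeight_applyMove (m := m) (u := u) (v := v)
    (by rcases huv with rfl | rfl <;> omega) hu
  by_cases hum : u ≤ m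
  · have : (if v ≤ m then 2 ^ (m - v) else 0) ≤ 2 * 2 ^ (m - u) := by
      split_ifs
      · rw [← pow_succ']; exact Nat.pow_le_pow_right two_pos (by omega)
      · exact Nat.zero_le _
    rw [if_pos hum] at h
    have := hE m hm
    omega
  · by_cases hvm : v ≤ m
    · -- the move enters `0, …, m` from `m + 1`, which therefore held two pebbles
      obtain rfl : u = m + 1 := by omega
      obtain rfl : v = m := by omega
      have hsucc := hE (v + 1) huL
      rw [lineWeight_succ, pow_succ] at hsucc
      rw [if_neg hum, if_pos hvm, Nat.sub_self, pow_zero] at h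
      omega
    · rw [if_neg hum, if_neg hvm] at h
      have := hE m hm
      omega

theorem lineWeight_add_two_ge (E : ℕ → ℕ) (m : ℕ) :
    4 * ∑ j ∈ range (m + 1), E j + 2 * E (m + 1) + E (m + 2) ≤ lineWeight E (m + 2) := by
  have h : lineWeight E (m + 2) = 2 * (2 * lineWeight E m + E (m + 1)) + E (m + 2) := by
    rw [lineWeight_succ, lineWeight_succ]
  have := sum_range_le_lineWeight (E := E) (m := m)
  omega

theorem lineBlocked_of_eq_pair {L k a c : ℕ}
    (hE : ∀ j ≤ L, E j = (if j = k then a else 0) + (if j = k + 1 then c else 0))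
    (ha : a < 2 ^ k) (hac : 2 * a + c < 2 ^ (k + 1)) : LineBlocked E L := by
  rw [lineBlocked_congr hE]
  intro m _
  simp only [lineWeight, add_mul, sum_add_distrib, ite_mul, zero_mul, sum_ite_eq', mem_range]
  rcases lt_trichotomy m k with hm | rfl | hm
  · rw [if_neg (by omega), if_neg (by omega)]
    positivity
  · simpa using ha
  · obtain ⟨i, rfl⟩ : ∃ i, m = k + 1 + i := ⟨m - (k + 1), by omega⟩
    rw [if_pos (by omega), if_pos (by omega), show k + 1 + i - k = i + 1 by omega,
      Nat.add_sub_cancel_left, pow_add 2 (k + 1) i]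
    calc a * 2 ^ (i + 1) + c * 2 ^ i = (2 * a + c) * 2 ^ i := by ring
      _ < 2 ^ (k + 1) * 2 ^ i := Nat.mul_lt_mul_of_pos_right hac (by positivity)

end Line

section Path

variable [DecidableEq V] {G : SimpleGraph V}

/-- Moving pebbles towards `f 0` keeps the weight; once at most one pebble is left at `f m`,
parity shows that the path without `f m` still carries enough weight. -/
theorem reaches_of_pow_le_lineWeight {f : ℕ → V} {m : ℕ}
    (hadj : ∀ j < m, G.Adj (f (j + 1)) (f j)) (hf : Set.InjOn f (Set.Iic m)) {D : V → ℕ}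
    (h : 2 ^ m ≤ lineWeight (D ∘ f) m) : Reaches G D (f 0) 1 := by
  induction m generalizing D with
  | zero => exact ⟨[], trivial, (by simpa using h : 1 ≤ D (f 0))⟩
  | succ m ih =>
    obtain ⟨N, hN⟩ : ∃ N, D (f (m + 1)) < N := ⟨_, lt_add_one _⟩
    induction N generalizing D with
    | zero => omega
    | succ N ihN =>
      have hmove : ∀ j ≤ m + 1,
          (applyMove D (f (m + 1), f m) ∘ f) j = applyMove (D ∘ f) (m + 1, m) j :=
        fun _ hj => applyMove_apply_of_injOn hf D (Set.mem_Iic.2 le_rfl)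
          (Set.mem_Iic.2 (Nat.le_succ m)) hj
      by_cases h2 : 2 ≤ D (f (m + 1))
      · refine Reaches.of_move (hadj m (lt_add_one m)) h2 (ihN ?_ ?_)
        · rwa [lineWeight_congr hmove, lineWeight_applyMove_succ h2 le_rfl]
        · simp only [applyMove, ↓reduceIte]
          omega
      · refine ih (fun j hj => hadj j (by omega))
          (hf.mono (Set.Iic_subset_Iic.2 (Nat.le_succ m))) ?_
        rw [lineWeight_succ, pow_succ] at h
        simp only [Function.comp] at h
        omega

end Path

section Cycle

open Fin.CommRing

variable {n : ℕ}

theorem cycleGraph_adj_iff (hn : 1 ≤ n) {u v : Fin (n + 1)} :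
    (cycleGraph (n + 1)).Adj u v ↔ v = u + 1 ∨ u = v + 1 := by
  have h1 : ((1 : Fin (n + 1)) : ℕ) = 1 := by
    rw [Fin.val_one', Nat.mod_eq_of_lt (by omega)]
  simp only [cycleGraph_adj', ← h1, Fin.val_inj, sub_eq_iff_eq_add', or_comm]

theorem cycleGraph_adj_neg {u v : Fin (n + 1)} :
    (cycleGraph (n + 1)).Adj (-u) (-v) ↔ (cycleGraph (n + 1)).Adj u v := by
  rw [cycleGraph_adj', cycleGraph_adj', neg_sub_neg, neg_sub_neg, or_comm]

def cycleRotation (r : Fin (n + 1)) : cycleGraph (n + 1) ≃g cycleGraph (n + 1) where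
  toEquiv := Equiv.addRight r
  map_rel_iff' := by simp [cycleGraph_adj']

@[simp] theorem cycleRotation_apply (r v : Fin (n + 1)) : cycleRotation r v = v + r := rfl

theorem natCast_injOn_Iic : Set.InjOn (Nat.cast : ℕ → Fin (n + 1)) (Set.Iic n) := by
  intro a ha b hb h
  have := congrArg Fin.val h
  rwa [Fin.val_natCast, Fin.val_natCast, Nat.mod_eq_of_lt (Nat.lt_succ_of_le ha),
    Nat.mod_eq_of_lt (Nat.lt_succ_of_le hb)] at this

/-- Neither of the arcs `0, 1, …, n` and `0, -1, …, -n` carries enough weight to bring a pebble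
to `0` on its own. -/
def CycleBlocked (D : Fin (n + 1) → ℕ) : Prop :=
  LineBlocked (fun j : ℕ => D j) n ∧ LineBlocked (fun j : ℕ => D (-j)) n

variable {D : Fin (n + 1) → ℕ}

theorem cycleBlocked_comp_neg : CycleBlocked (D ∘ Neg.neg) ↔ CycleBlocked D := by
  simp only [CycleBlocked, Function.comp, neg_neg, and_comm]

theorem CycleBlocked.apply_zero (hD : CycleBlocked D) : D 0 = 0 := by
  simpa using hD.1 0 (Nat.zero_le n)

theorem CycleBlocked.apply_neg_one_le (hn : 1 ≤ n) (hD : CycleBlocked D) : D (-1) ≤ 1 := by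
  have := hD.2 1 hn
  rw [lineWeight_succ] at this
  simp only [lineWeight_zero, Nat.cast_zero, neg_zero, zero_add, Nat.cast_one] at this
  omega

theorem CycleBlocked.lineBlocked_applyMove (hn : 1 ≤ n) (hD : CycleBlocked D)
    {u v : Fin (n + 1)} (huv : (cycleGraph (n + 1)).Adj u v) (hu : 2 ≤ D u) :
    LineBlocked (fun j : ℕ => applyMove D (u, v) j) n := by
  have hval : ∀ w : Fin (n + 1), w.val ∈ Set.Iic n := fun w => Fin.is_le w
  rw [lineBlocked_congr (E' := applyMove (D ∘ Nat.cast) (u.val, v.val)) fun j hj => by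
    simpa only [Fin.cast_val_eq_self] using
      applyMove_apply_of_injOn natCast_injOn_Iic D (hval u) (hval v) hj]
  have hu' : 2 ≤ D (u.val : Fin (n + 1)) := by rwa [Fin.cast_val_eq_self]
  have hsucc : ∀ w : Fin (n + 1), w + 1 = 0 ∨ (w + 1 : Fin (n + 1)).val = w.val + 1 := by
    intro w
    rw [Fin.val_add_one]
    split_ifs with h
    · exact Or.inl (h ▸ Fin.last_add_one n)
    · exact Or.inr rfl
  rcases (cycleGraph_adj_iff hn).1 huv with rfl | rfl
  · rcases hsucc u with h0 | h
    · have := hD.apply_neg_one_le hn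
      rw [← eq_neg_of_add_eq_zero_left h0] at this
      omega
    · exact hD.1.applyMove hu' (Or.inl h) (hval u)
  · rcases hsucc v with h0 | h
    · rw [h0, hD.apply_zero] at hu
      omega
    · exact hD.1.applyMove hu' (Or.inr h) (hval _)

/-- By the symmetry `x ↦ -x` of the cycle it suffices to control the arc `0, 1, …, n`. -/
theorem CycleBlocked.applyMove (hn : 1 ≤ n) (hD : CycleBlocked D) {u v : Fin (n + 1)}
    (huv : (cycleGraph (n + 1)).Adj u v) (hu : 2 ≤ D u) : CycleBlocked (applyMove D (u, v)) := by
  refine ⟨hD.lineBlocked_applyMove hn huv hu, ?_⟩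
  have h := (cycleBlocked_comp_neg.2 hD).lineBlocked_applyMove hn (cycleGraph_adj_neg.2 huv)
    (by simpa using hu)
  have hcomp := applyMove_comp_of_injective neg_injective D (-u) (-v)
  rw [neg_neg, neg_neg] at hcomp
  rwa [← hcomp] at h

theorem reaches_zero_iff_not_cycleBlocked (hn : 1 ≤ n) :
    Reaches (cycleGraph (n + 1)) D 0 1 ↔ ¬CycleBlocked D := by
  constructor
  · intro h hD
    refine not_reaches_of_invariant CycleBlocked (fun D u v hD huv hu => hD.applyMove hn huv hu)
      (fun D hD => ?_) hD h
    rw [hD.apply_zero]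
    exact one_pos
  · intro h
    have hadj : ∀ j : ℕ, (cycleGraph (n + 1)).Adj ((j + 1 : ℕ) : Fin (n + 1)) j := fun j =>
      (cycleGraph_adj_iff hn).2 (Or.inr (Nat.cast_succ j))
    simp only [CycleBlocked, LineBlocked, not_and_or, not_forall, not_lt] at h
    rcases h with ⟨m, hm, h⟩ | ⟨m, hm, h⟩
    · simpa using reaches_of_pow_le_lineWeight (fun j _ => hadj j)
        (natCast_injOn_Iic.mono (Set.Iic_subset_Iic.2 hm)) h
    · simpa using reaches_of_pow_le_lineWeight (fun j _ => cycleGraph_adj_neg.2 (hadj j))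
        (neg_injective.comp_injOn (natCast_injOn_Iic.mono (Set.Iic_subset_Iic.2 hm)))
        (f := fun j : ℕ => -(j : Fin (n + 1))) h

theorem sum_le_sum_arcs {p q : ℕ} (hpq : n ≤ p + q) (D : Fin (n + 1) → ℕ) :
    ∑ v, D v ≤ ∑ j ∈ range (p + 1), D j + ∑ j ∈ range (q + 1), D (-j) := by
  have hcover : (univ : Finset (Fin (n + 1))) ⊆ (range (p + 1)).image Nat.cast ∪
      (range (q + 1)).image fun j : ℕ => -(j : Fin (n + 1)) := by
    intro v _
    simp only [mem_union, mem_image, mem_range]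
    by_cases hv : v.val ≤ p
    · exact Or.inl ⟨v.val, by omega, Fin.cast_val_eq_self v⟩
    · refine Or.inr ⟨n + 1 - v.val, by omega, ?_⟩
      rw [Nat.cast_sub v.is_lt.le, CharP.cast_eq_zero, Fin.cast_val_eq_self, zero_sub, neg_neg]
  calc ∑ v, D v
      ≤ ∑ v ∈ (range (p + 1)).image Nat.cast ∪
          (range (q + 1)).image fun j : ℕ => -(j : Fin (n + 1)), D v :=
        sum_le_sum_of_subset hcover
    _ ≤ ∑ v ∈ (range (p + 1)).image Nat.cast, D v +
          ∑ v ∈ (range (q + 1)).image fun j : ℕ => -(j : Fin (n + 1)), D v :=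
        (sum_union_inter (f := D)).symm ▸ Nat.le_add_right _ _
    _ ≤ _ := add_le_add (sum_image_le_of_nonneg fun _ _ => Nat.zero_le _)
        (sum_image_le_of_nonneg fun _ _ => Nat.zero_le _)

end Cycle

section OddCycle

open Fin.CommRing

variable {k : ℕ}

theorem neg_natCast_eq_natCast_succ (k : ℕ) :
    -((k : ℕ) : Fin (2 * k + 1)) = ((k + 1 : ℕ) : Fin (2 * k + 1)) := by
  refine neg_eq_of_add_eq_zero_right ?_
  rw [← Nat.cast_add, show k + (k + 1) = 2 * k + 1 by ring, CharP.cast_eq_zero]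

/-- On the arcs `0, …, k + 1` and `0, -1, …, -(k + 1)` every vertex gets total weight at least
`3`: weight `2 + 1` at the ends `k, k + 1` of the antipodal edge, at least `4` elsewhere. -/
theorem three_mul_sum_add_two_le_of_cycleBlocked (hk : 1 ≤ k) {D : Fin (2 * k + 1) → ℕ}
    (hD : CycleBlocked D) : 3 * ∑ v, D v + 2 ≤ 2 ^ (k + 2) := by
  obtain ⟨m, rfl⟩ : ∃ m, k = m + 1 := ⟨k - 1, by omega⟩
  have hcover := sum_le_sum_arcs (p := m + 2) (q := m) (by omega) D
  rw [sum_range_succ, sum_range_succ] at hcover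
  have hfwd := (lineWeight_add_two_ge (fun j : ℕ => D j) m).trans_lt (hD.1 (m + 2) (by omega))
  have hbwd := (lineWeight_add_two_ge (fun j : ℕ => D (-j)) m).trans_lt (hD.2 (m + 2) (by omega))
  have hneg := neg_natCast_eq_natCast_succ (m + 1)
  have h1 : D (-((m + 1 : ℕ) : Fin _)) = D ((m + 2 : ℕ) : Fin _) := congrArg D hneg
  have h2 : D (-((m + 2 : ℕ) : Fin _)) = D ((m + 1 : ℕ) : Fin _) :=
    congrArg D (neg_eq_iff_eq_neg.2 hneg.symm)
  rw [h1, h2] at hbwd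
  rw [pow_succ]
  omega

theorem not_three_dvd_two_pow (j : ℕ) : ¬3 ∣ 2 ^ j := fun h => by
  have := Nat.Prime.dvd_of_dvd_pow Nat.prime_three h
  omega

theorem solvable_of_lt_sum (hk : 1 ≤ k) {D : Fin (2 * k + 1) → ℕ}
    (hD : 2 * (2 ^ (k + 1) / 3) < ∑ v, D v) : Solvable (cycleGraph (2 * k + 1)) D := by
  intro r
  have hsum : ∑ v, D (v + r) = ∑ v, D v := Equiv.sum_comp (Equiv.addRight r) D
  have hpow := not_three_dvd_two_pow (k + 1)
  have hrot : Reaches (cycleGraph (2 * k + 1)) (D ∘ cycleRotation r) 0 1 := by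
    refine (reaches_zero_iff_not_cycleBlocked (by omega)).2 fun hB => ?_
    have := three_mul_sum_add_two_le_of_cycleBlocked hk hB
    simp only [Function.comp, cycleRotation_apply] at this
    rw [hsum, pow_succ] at this
    omega
  simpa using Reaches.of_iso (cycleRotation r) hrot

theorem cycleBlocked_pair (hk : 1 ≤ k) {a c : ℕ} (ha : a < 2 ^ k) (hc : c < 2 ^ k)
    (hac : 2 * a + c < 2 ^ (k + 1)) (hca : 2 * c + a < 2 ^ (k + 1)) :
    CycleBlocked
      (Pi.single (k : Fin (2 * k + 1)) a + Pi.single ((k + 1 : ℕ) : Fin (2 * k + 1)) c) := by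
  have hinj {i j : ℕ} (hi : i ≤ 2 * k) (hj : j ≤ 2 * k) :
      (i : Fin (2 * k + 1)) = j ↔ i = j := natCast_injOn_Iic.eq_iff hi hj
  have hneg := neg_natCast_eq_natCast_succ k
  refine ⟨lineBlocked_of_eq_pair (fun j hj => ?_) ha hac,
    lineBlocked_of_eq_pair (fun j hj => ?_) hc hca⟩
  · simp only [Pi.add_apply, Pi.single_apply, hinj hj (by omega : k ≤ 2 * k),
      hinj hj (by omega : k + 1 ≤ 2 * k)]
  · simp only [Pi.add_apply, Pi.single_apply, neg_eq_iff_eq_neg, hneg,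
      neg_eq_iff_eq_neg.2 hneg.symm, hinj hj (by omega : k ≤ 2 * k),
      hinj hj (by omega : k + 1 ≤ 2 * k), add_comm]

theorem exists_not_solvable (hk : 1 ≤ k) {s : ℕ} (hs : s ≤ 2 * (2 ^ (k + 1) / 3)) :
    ∃ D : Fin (2 * k + 1) → ℕ, ∑ v, D v = s ∧ ¬Solvable (cycleGraph (2 * k + 1)) D := by
  have hpow := not_three_dvd_two_pow (k + 1)
  have h2k : 2 ^ (k + 1) = 2 * 2 ^ k := pow_succ' 2 k
  refine ⟨Pi.single (k : Fin (2 * k + 1)) (min s (2 ^ (k + 1) / 3)) +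
    Pi.single ((k + 1 : ℕ) : Fin (2 * k + 1)) (s - min s (2 ^ (k + 1) / 3)), ?_, fun h => ?_⟩
  · simp only [Pi.add_apply, sum_add_distrib, sum_pi_single', mem_univ, if_true]
    omega
  · exact (reaches_zero_iff_not_cycleBlocked (by omega)).1 (h 0)
      (cycleBlocked_pair hk (by omega) (by omega) (by omega) (by omega))

end OddCycle

end Pebbling

theorem pebbling_number_odd_cycle (k : ℕ) (hk : 1 ≤ k) :
    pebNum (SimpleGraph.cycleGraph (2 * k + 1)) = 2 * (2 ^ (k + 1) / 3) + 1 := by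
  refine IsLeast.csInf_eq
    ⟨fun D hD => Pebbling.solvable_of_lt_sum hk (by omega), fun s hs => ?_⟩
  by_contra! hlt
  obtain ⟨D, hD, hns⟩ := Pebbling.exists_not_solvable hk (s := s) (by omega)
  exact hns (hs D hD)
end

section
/- For every tree T, if r is an endpoint of a longest path in T, then π(T, r) = π(T); that is, the pebbling number is attained at every peripheral vertex. -/
open SimpleGraph

variable {V : Type*}

/-!
Root the tree at `ρ` and let `gather D u` be what the subtree of `u` can deliver to `u`
greedily: `D u` plus half of what each child gathers. A pebbling move never increases
`gather D ρ`, and the greedy strategy realises it, so `D` reaches `ρ` iff `gather D ρ ≥ 1`.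
By induction over subtrees, `∑ D ≤ gather D ρ * 2 ^ height ρ + W ρ` with
`W ρ = ∑_{w ≠ ρ} 2 ^ height w`, and equality is attained with `gather D ρ = 0`;
hence `π(T, ρ) = W ρ + 1`.

It remains to show `W v ≤ W r` for a peripheral `r`. Since `r` ends a diameter,
`d(v, y) ≤ max (d(v, r)) (d(y, r))` for all `v, y`. Reflecting the geodesic `[v, r]` and fixing
every other vertex is a bijection from `V \ {v}` to `V \ {r}`; vertices off the geodesic keep their
subtree, and by the inequality above no vertex of the geodesic loses height.
-/

namespace SimpleGraph

variable {G : SimpleGraph V}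

lemma Walk.IsPath.append_of_inter_support {a b c : V} {p : G.Walk a b} {q : G.Walk b c}
    (hp : p.IsPath) (hq : q.IsPath) (h : ∀ x ∈ p.support, x ∈ q.support → x = b) :
    (p.append q).IsPath := by
  rw [Walk.isPath_def, Walk.support_append]
  refine hp.support_nodup.append (hq.support_nodup.sublist q.support.tail_sublist) ?_
  intro x hxp hxq
  obtain rfl := h x hxp (List.mem_of_mem_tail hxq)
  have := hq.support_nodup
  rw [← Walk.cons_tail_support q] at this
  exact (List.nodup_cons.mp this).1 hxq

lemma Walk.dist_getVert_of_length_eq_dist (hG : G.Connected) {u v : V} (p : G.Walk u v)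
    (hp : p.length = G.dist u v) {i : ℕ} (hi : i ≤ p.length) :
    G.dist u (p.getVert i) = i ∧ G.dist (p.getVert i) v = p.length - i := by
  have h₁ := dist_le (p.take i)
  have h₂ := dist_le (p.drop i)
  have h₃ : G.dist u v ≤ G.dist u (p.getVert i) + G.dist (p.getVert i) v := hG.dist_triangle
  rw [Walk.take_length] at h₁
  rw [Walk.drop_length] at h₂
  omega

namespace IsTree

variable {T : SimpleGraph V}

lemma length_eq_dist (hT : T.IsTree) {x y : V} {p : T.Walk x y} (hp : p.IsPath) :
    p.length = T.dist x y := by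
  obtain ⟨q, hq, hql⟩ := hT.connected.exists_path_of_dist x y
  rw [hT.existsUnique_path x y |>.unique hp hq, hql]

lemma dist_add_dist_of_mem_support (hT : T.IsTree) {x y z : V} {p : T.Walk x y}
    (hp : p.IsPath) (hz : z ∈ p.support) : T.dist x z + T.dist z y = T.dist x y := by
  classical
  rw [← hT.length_eq_dist hp, ← hT.length_eq_dist (hp.takeUntil hz),
    ← hT.length_eq_dist (hp.dropUntil hz), ← Walk.length_append, Walk.take_spec]

-- The geodesic from `z` to the vertex `c` of `p` nearest to `z` meets `p` only in `c`.
lemma dist_add_dist_of_nearest (hT : T.IsTree) {x y z c : V} {p : T.Walk x y} (hp : p.IsPath)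
    (hc : c ∈ p.support) (hmin : ∀ w ∈ p.support, T.dist c z ≤ T.dist w z) :
    T.dist x c + T.dist c z = T.dist x z := by
  classical
  obtain ⟨q, hq, hql⟩ := hT.connected.exists_path_of_dist c z
  have hdisj : ∀ w ∈ (p.takeUntil c hc).support, w ∈ q.support → w = c := by
    intro w hwp hwq
    have hsplit := hT.dist_add_dist_of_mem_support hq hwq
    have := hmin w (p.support_takeUntil_subset_support hc hwp)
    exact (hT.connected.dist_eq_zero_iff.mp (by omega)).symm
  have := hT.length_eq_dist ((hp.takeUntil hc).append_of_inter_support hq hdisj)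
  rwa [Walk.length_append, hT.length_eq_dist (hp.takeUntil hc), hql] at this

lemma exists_median (hT : T.IsTree) (x y z : V) :
    ∃ c, T.dist x c + T.dist c y = T.dist x y ∧ T.dist x c + T.dist c z = T.dist x z ∧
      T.dist y c + T.dist c z = T.dist y z := by
  classical
  obtain ⟨p, hp, -⟩ := hT.connected.exists_path_of_dist x y
  obtain ⟨c, hc, hmin⟩ := p.support.toFinset.exists_min_image (T.dist · z)
    ⟨x, List.mem_toFinset.mpr p.start_mem_support⟩
  simp only [List.mem_toFinset] at hc hmin
  have hrev : ∀ w, w ∈ p.reverse.support ↔ w ∈ p.support := by simp [Walk.support_reverse]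
  exact ⟨c, hT.dist_add_dist_of_mem_support hp hc, hT.dist_add_dist_of_nearest hp hc hmin,
    hT.dist_add_dist_of_nearest hp.reverse ((hrev c).mpr hc) fun w hw => hmin w ((hrev w).mp hw)⟩

lemma eq_of_dist_eq (hT : T.IsTree) {x z a b : V} (ha : T.dist x a + T.dist a z = T.dist x z)
    (hb : T.dist x b + T.dist b z = T.dist x z) (hab : T.dist x a = T.dist x b) : a = b := by
  obtain ⟨P, -, hPu⟩ := hT.existsUnique_path x z
  have hP : ∀ w, T.dist x w + T.dist w z = T.dist x z → P.getVert (T.dist x w) = w := by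
    intro w hw
    obtain ⟨p, -, hpl⟩ := hT.connected.exists_path_of_dist x w
    obtain ⟨q, -, hql⟩ := hT.connected.exists_path_of_dist w z
    have hpq : (p.append q).IsPath := by
      apply Walk.isPath_of_length_eq_dist
      rw [Walk.length_append, hpl, hql, hw]
    rw [← hPu _ hpq, Walk.getVert_append, ← hpl]
    simp
  rw [← hP a ha, ← hP b hb, hab]

lemma dist_add_dist_of_le (hT : T.IsTree) {x z a b : V}
    (ha : T.dist x a + T.dist a z = T.dist x z) (hb : T.dist x b + T.dist b z = T.dist x z)
    (hab : T.dist x a ≤ T.dist x b) : T.dist x a + T.dist a b = T.dist x b := by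
  obtain ⟨q, -, hql⟩ := hT.connected.exists_path_of_dist x b
  obtain ⟨h₁, h₂⟩ :=
    q.dist_getVert_of_length_eq_dist hT.connected hql (i := T.dist x a) (by omega)
  have h₃ : T.dist (q.getVert (T.dist x a)) z ≤ _ + T.dist b z := hT.connected.dist_triangle
  have h₄ : T.dist x z ≤ T.dist x (q.getVert (T.dist x a)) + _ := hT.connected.dist_triangle
  have := hT.eq_of_dist_eq (z := z) (a := q.getVert (T.dist x a)) (b := a) (by omega) ha h₁
  rw [this] at h₂
  omega

lemma dist_add_dist_eq_or (hT : T.IsTree) {a b c : V} (hc : T.dist a c + T.dist c b = T.dist a b)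
    (u : V) : T.dist u c + T.dist c a = T.dist u a ∨ T.dist u c + T.dist c b = T.dist u b := by
  obtain ⟨m, hmab, hmau, hmbu⟩ := hT.exists_median a b u
  have t₁ : T.dist u a ≤ T.dist u c + T.dist c a := hT.connected.dist_triangle
  have t₂ : T.dist u b ≤ T.dist u c + T.dist c b := hT.connected.dist_triangle
  have t₃ : T.dist u c ≤ T.dist u m + T.dist m c := hT.connected.dist_triangle
  have := T.dist_comm (u := u) (v := a); have := T.dist_comm (u := u) (v := b)
  have := T.dist_comm (u := u) (v := m); have := T.dist_comm (u := b) (v := m)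
  have := T.dist_comm (u := c) (v := a); have := T.dist_comm (u := c) (v := m)
  rcases le_total (T.dist a c) (T.dist a m) with h | h
  · have := hT.dist_add_dist_of_le hc hmab h
    omega
  · have := hT.dist_add_dist_of_le hmab hc h
    omega

lemma dist_eq_add_one_or_of_adj (hT : T.IsTree) {u w : V} (h : T.Adj u w) (ρ : V) :
    T.dist ρ w = T.dist ρ u + 1 ∨ T.dist ρ u = T.dist ρ w + 1 := by
  obtain ⟨m, hmuw, hmuρ, hmwρ⟩ := hT.exists_median u w ρ
  have huw : T.dist u w = 1 := dist_eq_one_iff_adj.mpr h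
  have hwu : T.dist w u = 1 := dist_eq_one_iff_adj.mpr h.symm
  rw [T.dist_comm (u := ρ) (v := u), T.dist_comm (u := ρ) (v := w)]
  rcases Nat.eq_zero_or_pos (T.dist u m) with hum | hum
  · obtain rfl := hT.connected.dist_eq_zero_iff.mp hum
    left; omega
  · obtain rfl := hT.connected.dist_eq_zero_iff.mp (show T.dist m w = 0 by omega)
    right; omega

lemma dist_le_max_of_forall_dist_le (hT : T.IsTree) {u r : V}
    (hr : ∀ a b, T.dist a b ≤ T.dist u r) (v y : V) :
    T.dist v y ≤ max (T.dist v r) (T.dist y r) := by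
  obtain ⟨m, hmvy, hmvr, hmyr⟩ := hT.exists_median v y r
  have t : T.dist u r ≤ T.dist u m + T.dist m r := hT.connected.dist_triangle
  have := T.dist_comm (u := m) (v := v); have := T.dist_comm (u := m) (v := y)
  rcases hT.dist_add_dist_eq_or hmvy u with h | h
  · have := hr u v; omega
  · have := hr u y; omega

end IsTree

end SimpleGraph

def MovesIn (S : Set V) (l : List (V × V)) : Prop := ∀ e ∈ l, e.1 ∈ S ∧ e.2 ∈ S

lemma MovesIn.mono {S S' : Set V} {l : List (V × V)} (hl : MovesIn S l) (h : S ⊆ S') :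
    MovesIn S' l := fun e he => ⟨h (hl e he).1, h (hl e he).2⟩

lemma MovesIn.append {S : Set V} {l₁ l₂ : List (V × V)} (h₁ : MovesIn S l₁)
    (h₂ : MovesIn S l₂) : MovesIn S (l₁ ++ l₂) := by
  intro e he
  rcases List.mem_append.mp he with h | h
  exacts [h₁ e h, h₂ e h]

section PebblingSequences

variable [DecidableEq V] {G : SimpleGraph V}

lemma applySeq_append (D : V → ℕ) (l₁ l₂ : List (V × V)) :
    applySeq D (l₁ ++ l₂) = applySeq (applySeq D l₁) l₂ := by
  induction l₁ generalizing D with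
  | nil => rfl
  | cons e l ih => exact ih _

lemma ValidSeq.append {D : V → ℕ} {l₁ l₂ : List (V × V)} (h₁ : ValidSeq G D l₁)
    (h₂ : ValidSeq G (applySeq D l₁) l₂) : ValidSeq G D (l₁ ++ l₂) := by
  induction l₁ generalizing D with
  | nil => exact h₂
  | cons e l ih => exact ⟨h₁.1, h₁.2.1, ih h₁.2.2 h₂⟩

lemma applyMove_of_ne (D : V → ℕ) {e : V × V} {x : V} (h₁ : x ≠ e.1) (h₂ : x ≠ e.2) :
    applyMove D e x = D x := by
  simp [applyMove, h₁, h₂]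

lemma applySeq_of_notMem {S : Set V} {l : List (V × V)} (hl : MovesIn S l) {x : V}
    (hx : x ∉ S) (D : V → ℕ) : applySeq D l x = D x := by
  induction l generalizing D with
  | nil => rfl
  | cons e l ih =>
    have he := hl e List.mem_cons_self
    rw [applySeq, ih (fun e' he' => hl e' (List.mem_cons_of_mem e he'))]
    exact applyMove_of_ne D (fun h => hx (h ▸ he.1)) (fun h => hx (h ▸ he.2))

lemma validSeq_replicate {a b : V} (hab : G.Adj a b) (n : ℕ) {D : V → ℕ} (h : 2 * n ≤ D a) :
    ValidSeq G D (List.replicate n (a, b)) ∧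
      applySeq D (List.replicate n (a, b)) b = D b + n ∧
      ∀ x, x ≠ a → x ≠ b → applySeq D (List.replicate n (a, b)) x = D x := by
  induction n generalizing D with
  | zero => exact ⟨trivial, rfl, fun _ _ _ => rfl⟩
  | succ n ih =>
    have hDa : applyMove D (a, b) a = D a - 2 := by simp [applyMove]
    have hDb : applyMove D (a, b) b = D b + 1 := by simp [applyMove, hab.ne.symm]
    obtain ⟨hv, hb, hx⟩ := ih (D := applyMove D (a, b)) (by omega)
    refine ⟨⟨hab, by simp only; omega, hv⟩, ?_, fun x hxa hxb => ?_⟩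
    · rw [List.replicate_succ, applySeq, hb, hDb]; omega
    · rw [List.replicate_succ, applySeq, hx x hxa hxb, applyMove_of_ne D hxa hxb]

end PebblingSequences

lemma exists_le_sum_eq [Fintype V] (D : V → ℕ) {k : ℕ} (hk : k ≤ ∑ x, D x) :
    ∃ D' ≤ D, ∑ x, D' x = k := by
  obtain ⟨g, hg, hsum⟩ := (Finsupp.equivFunOnFinite.symm D).exists_le_degree_eq k
    (by rwa [Finsupp.degree_eq_sum])
  exact ⟨g, fun x => hg x, by rwa [Finsupp.degree_eq_sum] at hsum⟩

lemma mul_two_pow_le_div_two_mul_two_pow_add {g h H : ℕ} (hH : h < H) :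
    g * 2 ^ h ≤ g / 2 * 2 ^ H + 2 ^ h :=
  calc g * 2 ^ h ≤ (2 * (g / 2) + 1) * 2 ^ h := by gcongr; omega
    _ = g / 2 * 2 ^ (h + 1) + 2 ^ h := by ring
    _ ≤ g / 2 * 2 ^ H + 2 ^ h := by gcongr <;> omega

namespace TreePebbling

open Finset

noncomputable section Rooted

variable [Fintype V] (T : SimpleGraph V)

def subtree (ρ u : V) : Finset V :=
  univ.filter fun w => T.dist ρ w = T.dist ρ u + T.dist u w

def children (ρ u : V) : Finset V :=
  univ.filter fun c => T.dist u c = 1 ∧ T.dist ρ c = T.dist ρ u + 1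

def height (ρ u : V) : ℕ := (subtree T ρ u).sup (T.dist u)

/-- For `u = ρ` this is `∑ (2 ^ aᵢ - 1)` over a maximum path partition of the tree. -/
def descendantWeight [DecidableEq V] (ρ u : V) : ℕ :=
  ∑ w ∈ (subtree T ρ u).erase u, 2 ^ height T ρ w

end Rooted

section Subtrees

variable [Fintype V] {T : SimpleGraph V} {ρ u c w : V}

@[simp]
lemma mem_subtree : w ∈ subtree T ρ u ↔ T.dist ρ w = T.dist ρ u + T.dist u w := by
  simp [subtree]

@[simp]
lemma mem_children :
    c ∈ children T ρ u ↔ T.dist u c = 1 ∧ T.dist ρ c = T.dist ρ u + 1 := by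
  simp [children]

lemma self_mem_subtree (u : V) : u ∈ subtree T ρ u := by simp

lemma subtree_self : subtree T ρ ρ = univ := by ext; simp

lemma card_sub_dist_lt_of_mem_children (hc : c ∈ children T ρ u) :
    Fintype.card V - T.dist ρ c < Fintype.card V - T.dist ρ u := by
  rw [mem_children] at hc
  obtain ⟨p, hp, hpl⟩ :=
    (Reachable.of_dist_ne_zero (by omega : T.dist ρ c ≠ 0)).exists_path_of_dist
  have := hp.length_lt
  omega

lemma mem_subtree_of_mem_children (hc : c ∈ children T ρ u) : c ∈ subtree T ρ u := by
  simp only [mem_children, mem_subtree] at *; omega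

lemma notMem_subtree_of_mem_children (hc : c ∈ children T ρ u) : u ∉ subtree T ρ c := by
  simp only [mem_children, mem_subtree] at *; omega

lemma mem_subtree_trans (hT : T.IsTree) {y : V} (hw : w ∈ subtree T ρ u)
    (hy : y ∈ subtree T ρ w) :
    y ∈ subtree T ρ u ∧ T.dist u y = T.dist u w + T.dist w y := by
  rw [mem_subtree] at *
  have : T.dist u y ≤ T.dist u w + T.dist w y := hT.connected.dist_triangle
  have : T.dist ρ y ≤ T.dist ρ u + T.dist u y := hT.connected.dist_triangle
  omega

lemma disjoint_subtree_of_mem_children (hT : T.IsTree) {c' : V} (hc : c ∈ children T ρ u)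
    (hc' : c' ∈ children T ρ u) (hne : c ≠ c') :
    Disjoint (subtree T ρ c) (subtree T ρ c') := by
  refine disjoint_left.mpr fun w hw hw' => hne ?_
  have h₁ := (mem_subtree_trans hT (mem_subtree_of_mem_children hc) hw).2
  have h₂ := (mem_subtree_trans hT (mem_subtree_of_mem_children hc') hw').2
  rw [mem_children] at hc hc'
  exact hT.eq_of_dist_eq (x := u) (z := w) (by omega) (by omega) (by omega)

lemma exists_mem_children_of_mem_subtree (hT : T.IsTree) (hw : w ∈ subtree T ρ u)
    (hne : w ≠ u) : ∃ c ∈ children T ρ u, w ∈ subtree T ρ c := by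
  obtain ⟨q, -, hql⟩ := hT.connected.exists_path_of_dist u w
  have hpos := hT.connected.pos_dist_of_ne hne.symm
  obtain ⟨h₁, h₂⟩ := q.dist_getVert_of_length_eq_dist hT.connected hql (i := 1) (by omega)
  have : T.dist ρ (q.getVert 1) ≤ T.dist ρ u + _ := hT.connected.dist_triangle
  have : T.dist ρ w ≤ T.dist ρ (q.getVert 1) + _ := hT.connected.dist_triangle
  rw [mem_subtree] at hw
  exact ⟨q.getVert 1, mem_children.mpr ⟨h₁, by omega⟩, mem_subtree.mpr (by omega)⟩

lemma subtree_erase_eq_biUnion [DecidableEq V] (hT : T.IsTree) (u : V) :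
    (subtree T ρ u).erase u = (children T ρ u).biUnion (subtree T ρ) := by
  ext w
  simp only [mem_erase, mem_biUnion]
  constructor
  · rintro ⟨hne, hw⟩
    exact exists_mem_children_of_mem_subtree hT hw hne
  · rintro ⟨c, hc, hw⟩
    exact ⟨fun h => notMem_subtree_of_mem_children hc (h ▸ hw),
      (mem_subtree_trans hT (mem_subtree_of_mem_children hc) hw).1⟩

lemma sum_subtree_erase {M : Type*} [AddCommMonoid M] [DecidableEq V] (hT : T.IsTree)
    (f : V → M) (u : V) :
    ∑ w ∈ (subtree T ρ u).erase u, f w =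
      ∑ c ∈ children T ρ u, ∑ w ∈ subtree T ρ c, f w := by
  rw [subtree_erase_eq_biUnion hT, sum_biUnion]
  exact fun c hc c' hc' hne => disjoint_subtree_of_mem_children hT hc hc' hne

lemma sum_subtree {M : Type*} [AddCommMonoid M] [DecidableEq V] (hT : T.IsTree) (f : V → M)
    (u : V) :
    ∑ w ∈ subtree T ρ u, f w =
      f u + ∑ c ∈ children T ρ u, ∑ w ∈ subtree T ρ c, f w := by
  rw [← add_sum_erase _ _ (self_mem_subtree u), sum_subtree_erase hT]

lemma dist_le_height (hw : w ∈ subtree T ρ u) : T.dist u w ≤ height T ρ u :=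
  le_sup (f := T.dist u) hw

lemma exists_height_eq_dist (u : V) : ∃ w ∈ subtree T ρ u, height T ρ u = T.dist u w :=
  exists_mem_eq_sup _ ⟨u, self_mem_subtree u⟩ _

lemma height_lt_of_mem_children (hT : T.IsTree) (hc : c ∈ children T ρ u) :
    height T ρ c < height T ρ u := by
  obtain ⟨w, hw, hcw⟩ := exists_height_eq_dist (T := T) (ρ := ρ) c
  obtain ⟨hwu, huw⟩ := mem_subtree_trans hT (mem_subtree_of_mem_children hc) hw
  have := dist_le_height hwu
  rw [(mem_children.mp hc).1] at huw
  omega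

lemma exists_height_add_one_eq (hT : T.IsTree) (u : V) (h : (children T ρ u).Nonempty) :
    ∃ c ∈ children T ρ u, height T ρ c + 1 = height T ρ u := by
  obtain ⟨w, hw, huw⟩ := exists_height_eq_dist (T := T) (ρ := ρ) u
  obtain ⟨c₀, hc₀⟩ := h
  have hwu : w ≠ u := by
    rintro rfl
    have := height_lt_of_mem_children hT hc₀
    simp_all
  obtain ⟨c, hc, hwc⟩ := exists_mem_children_of_mem_subtree hT hw hwu
  have hcw := (mem_subtree_trans hT (mem_subtree_of_mem_children hc) hwc).2
  have := dist_le_height hwc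
  have := height_lt_of_mem_children hT hc
  rw [(mem_children.mp hc).1] at hcw
  exact ⟨c, hc, by omega⟩

lemma height_eq_zero_of_children_eq_empty (hT : T.IsTree) (h : children T ρ u = ∅) :
    height T ρ u = 0 := by
  obtain ⟨w, hw, huw⟩ := exists_height_eq_dist (T := T) (ρ := ρ) u
  by_cases hwu : w = u
  · simp [huw, hwu]
  · obtain ⟨c, hc, -⟩ := exists_mem_children_of_mem_subtree hT hw hwu
    simp [h] at hc

lemma descendantWeight_eq_sum_children [DecidableEq V] (hT : T.IsTree) (u : V) :
    descendantWeight T ρ u =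
      ∑ c ∈ children T ρ u, (2 ^ height T ρ c + descendantWeight T ρ c) := by
  rw [descendantWeight, sum_subtree_erase hT]
  refine sum_congr rfl fun c _ => ?_
  rw [descendantWeight, ← add_sum_erase _ _ (self_mem_subtree c)]

end Subtrees

section Gather

variable [Fintype V] {T : SimpleGraph V} {ρ : V}

variable (T) in
/-- The number of pebbles that `D` can bring to `u` by moves inside the subtree of `u`. -/
noncomputable def gather (ρ : V) (D : V → ℕ) (u : V) : ℕ :=
  D u + ∑ c ∈ (children T ρ u).attach, gather ρ D c.1 / 2
termination_by Fintype.card V - T.dist ρ u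
decreasing_by exact card_sub_dist_lt_of_mem_children c.2

lemma gather_eq (D : V → ℕ) (u : V) :
    gather T ρ D u = D u + ∑ c ∈ children T ρ u, gather T ρ D c / 2 := by
  rw [gather]
  exact congrArg _ (sum_attach _ fun c => gather T ρ D c / 2)

lemma le_gather (D : V → ℕ) (u : V) : D u ≤ gather T ρ D u := by
  rw [gather_eq]; omega

lemma gather_congr (hT : T.IsTree) {D D' : V → ℕ} (u : V)
    (h : ∀ x ∈ subtree T ρ u, D x = D' x) : gather T ρ D u = gather T ρ D' u := by
  rw [gather_eq, gather_eq, h u (self_mem_subtree u)]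
  congr 1
  refine sum_congr rfl fun c hc => ?_
  exact congrArg (· / 2) <| gather_congr hT c fun x hx =>
    h x (mem_subtree_trans hT (mem_subtree_of_mem_children hc) hx).1
termination_by Fintype.card V - T.dist ρ u
decreasing_by exact card_sub_dist_lt_of_mem_children hc

lemma gather_mono {D D' : V → ℕ} (h : D ≤ D') (u : V) :
    gather T ρ D u ≤ gather T ρ D' u := by
  rw [gather_eq, gather_eq]
  gcongr with c hc
  · exact h u
  · exact gather_mono h c
termination_by Fintype.card V - T.dist ρ u
decreasing_by exact card_sub_dist_lt_of_mem_children hc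

lemma gather_le_of_eq_off_subtree (hT : T.IsTree) {D D' : V → ℕ} {p : V}
    (hD : ∀ x ∉ subtree T ρ p, D' x = D x) (hp : gather T ρ D' p ≤ gather T ρ D p) (u : V)
    (hpu : p ∈ subtree T ρ u) : gather T ρ D' u ≤ gather T ρ D u := by
  by_cases hu : u = p
  · exact hu ▸ hp
  obtain ⟨c₀, hc₀, hpc₀⟩ := exists_mem_children_of_mem_subtree hT hpu (Ne.symm hu)
  have hout : ∀ x ∉ subtree T ρ c₀, D' x = D x :=
    fun x hx => hD x fun hxp => hx (mem_subtree_trans hT hpc₀ hxp).1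
  rw [gather_eq, gather_eq, hout u (notMem_subtree_of_mem_children hc₀)]
  gcongr with c hc
  rcases eq_or_ne c c₀ with rfl | hne
  · exact gather_le_of_eq_off_subtree hT hD hp c hpc₀
  · refine (gather_congr hT c fun x hx => ?_).le
    exact hout x (disjoint_left.mp (disjoint_subtree_of_mem_children hT hc hc₀ hne) hx)
termination_by Fintype.card V - T.dist ρ u
decreasing_by exact card_sub_dist_lt_of_mem_children hc

lemma gather_of_eq_off_edge [DecidableEq V] (hT : T.IsTree) {D D' : V → ℕ} {p ch : V}
    (hch : ch ∈ children T ρ p) (hD : ∀ x, x ≠ p → x ≠ ch → D' x = D x) :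
    gather T ρ D' p = D' p + (D' ch + ∑ c ∈ children T ρ ch, gather T ρ D c / 2) / 2 +
      ∑ c ∈ (children T ρ p).erase ch, gather T ρ D c / 2 := by
  have hpch := notMem_subtree_of_mem_children hch
  have h₁ : ∑ c ∈ children T ρ ch, gather T ρ D' c / 2 =
      ∑ c ∈ children T ρ ch, gather T ρ D c / 2 := by
    refine sum_congr rfl fun c hc => ?_
    have hsub x (hx : x ∈ subtree T ρ c) : x ∈ subtree T ρ ch :=
      (mem_subtree_trans hT (mem_subtree_of_mem_children hc) hx).1
    refine congrArg (· / 2) (gather_congr hT c fun x hx => hD x ?_ ?_)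
    · exact fun h => hpch (h ▸ hsub x hx)
    · exact fun h => notMem_subtree_of_mem_children hc (h ▸ hx)
  have h₂ : ∑ c ∈ (children T ρ p).erase ch, gather T ρ D' c / 2 =
      ∑ c ∈ (children T ρ p).erase ch, gather T ρ D c / 2 := by
    refine sum_congr rfl fun c hc => ?_
    obtain ⟨hne, hcp⟩ := mem_erase.mp hc
    refine congrArg (· / 2) (gather_congr hT c fun x hx => hD x ?_ ?_)
    · exact fun h => notMem_subtree_of_mem_children hcp (h ▸ hx)
    · rintro rfl
      exact disjoint_left.mp (disjoint_subtree_of_mem_children hT hcp hch hne) hx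
        (self_mem_subtree x)
  rw [gather_eq, ← add_sum_erase _ _ hch, gather_eq, h₁, h₂, add_assoc]

lemma gather_applyMove_le [DecidableEq V] (hT : T.IsTree) {D : V → ℕ} {a b : V}
    (hab : T.Adj a b) (h2 : 2 ≤ D a) :
    gather T ρ (applyMove D (a, b)) ρ ≤ gather T ρ D ρ := by
  have hDa : applyMove D (a, b) a = D a - 2 := by simp [applyMove]
  have hDb : applyMove D (a, b) b = D b + 1 := by simp [applyMove, hab.ne.symm]
  have hoff : ∀ x, x ≠ a → x ≠ b → applyMove D (a, b) x = D x :=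
    fun x ha hb => applyMove_of_ne D ha hb
  have hroot : ∀ p, p ∈ subtree T ρ ρ := fun p => by rw [subtree_self]; exact mem_univ p
  rcases hT.dist_eq_add_one_or_of_adj hab ρ with h | h
  · have hb : b ∈ children T ρ a := mem_children.mpr ⟨dist_eq_one_iff_adj.mpr hab, h⟩
    refine gather_le_of_eq_off_subtree hT (p := a) (fun x hx => hoff x ?_ ?_) ?_ ρ (hroot a)
    · rintro rfl; exact hx (self_mem_subtree x)
    · rintro rfl; exact hx (mem_subtree_of_mem_children hb)
    rw [gather_of_eq_off_edge hT hb hoff, gather_of_eq_off_edge hT hb fun _ _ _ => rfl, hDa, hDb]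
    omega
  · have ha : a ∈ children T ρ b := mem_children.mpr ⟨dist_eq_one_iff_adj.mpr hab.symm, h⟩
    have hoff' : ∀ x, x ≠ b → x ≠ a → applyMove D (a, b) x = D x :=
      fun x hb ha => hoff x ha hb
    refine gather_le_of_eq_off_subtree hT (p := b) (fun x hx => hoff x ?_ ?_) ?_ ρ (hroot b)
    · rintro rfl; exact hx (mem_subtree_of_mem_children ha)
    · rintro rfl; exact hx (self_mem_subtree x)
    rw [gather_of_eq_off_edge hT ha hoff', gather_of_eq_off_edge hT ha fun _ _ _ => rfl, hDa,
      hDb]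
    omega

end Gather

section Threshold

variable [Fintype V] [DecidableEq V] {T : SimpleGraph V} {ρ : V}

lemma applySeq_le_gather (hT : T.IsTree) {D : V → ℕ} {l : List (V × V)} (hl : ValidSeq T D l) :
    applySeq D l ρ ≤ gather T ρ D ρ := by
  induction l generalizing D with
  | nil => exact le_gather D ρ
  | cons e l ih => exact (ih hl.2.2).trans (gather_applyMove_le hT hl.1 hl.2.1)

lemma exists_validSeq_gather_children (hT : T.IsTree) (u : V)
    (hrec : ∀ c ∈ children T ρ u, ∀ D : V → ℕ, ∃ l, MovesIn (subtree T ρ c) l ∧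
      ValidSeq T D l ∧ gather T ρ D c ≤ applySeq D l c)
    (s : Finset V) (hs : s ⊆ children T ρ u) (D : V → ℕ) :
    ∃ l, MovesIn (subtree T ρ u) l ∧ ValidSeq T D l ∧
      D u + ∑ c ∈ s, gather T ρ D c / 2 ≤ applySeq D l u := by
  induction s using Finset.induction_on generalizing D with
  | empty => exact ⟨[], fun _ h => by simp at h, trivial, by simp [applySeq]⟩
  | insert c s hcs ih =>
    have hc := hs (mem_insert_self c s)
    have hcu := mem_subtree_of_mem_children hc
    have huc := notMem_subtree_of_mem_children hc
    obtain ⟨l₁, hm₁, hv₁, hg₁⟩ := hrec c hc D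
    have hadj : T.Adj c u := (dist_eq_one_iff_adj.mp (mem_children.mp hc).1).symm
    obtain ⟨hv₂, hu₂, hx₂⟩ :=
      validSeq_replicate hadj (gather T ρ D c / 2) (D := applySeq D l₁) (by omega)
    set l₂ := List.replicate (gather T ρ D c / 2) (c, u)
    set D₂ := applySeq (applySeq D l₁) l₂
    obtain ⟨l₃, hm₃, hv₃, hg₃⟩ := ih (fun x hx => hs (mem_insert_of_mem hx)) D₂
    have hsame : ∀ c' ∈ s, gather T ρ D₂ c' = gather T ρ D c' := by
      intro c' hc'
      have hc's := hs (mem_insert_of_mem hc')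
      refine gather_congr hT c' fun x hx => ?_
      have hne : c ≠ c' := by rintro rfl; exact hcs hc'
      have hxc : x ∉ subtree T ρ c := fun h =>
        disjoint_left.mp (disjoint_subtree_of_mem_children hT hc hc's hne) h hx
      have hxc' : x ≠ c := by rintro rfl; exact hxc (self_mem_subtree x)
      have hxu : x ≠ u := by rintro rfl; exact notMem_subtree_of_mem_children hc's hx
      rw [hx₂ x hxc' hxu, applySeq_of_notMem hm₁ hxc]
    refine ⟨l₁ ++ (l₂ ++ l₃), (hm₁.mono fun x hx => ?_).append (MovesIn.append ?_ hm₃),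
      hv₁.append (hv₂.append hv₃), ?_⟩
    · exact (mem_subtree_trans hT hcu hx).1
    · intro e he
      rw [List.eq_of_mem_replicate he]
      exact ⟨hcu, self_mem_subtree u⟩
    · rw [applySeq_append, applySeq_append, sum_insert hcs]
      change _ ≤ applySeq D₂ l₃ u
      rw [sum_congr rfl fun c' hc' => by rw [hsame c' hc'], hu₂,
        applySeq_of_notMem hm₁ huc] at hg₃
      omega

lemma exists_validSeq_gather (hT : T.IsTree) (u : V) (D : V → ℕ) :
    ∃ l, MovesIn (subtree T ρ u) l ∧ ValidSeq T D l ∧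
      gather T ρ D u ≤ applySeq D l u := by
  rw [gather_eq]
  exact exists_validSeq_gather_children hT u (fun c hc D => exists_validSeq_gather hT c D) _
    subset_rfl D
termination_by Fintype.card V - T.dist ρ u
decreasing_by exact card_sub_dist_lt_of_mem_children hc

theorem reaches_iff_one_le_gather (hT : T.IsTree) (D : V → ℕ) :
    Reaches T D ρ 1 ↔ 1 ≤ gather T ρ D ρ := by
  constructor
  · rintro ⟨l, hl, hρ⟩
    exact hρ.trans (applySeq_le_gather hT hl)
  · intro h
    obtain ⟨l, -, hl, hρ⟩ := exists_validSeq_gather (ρ := ρ) hT ρ D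
    exact ⟨l, hl, h.trans hρ⟩

lemma sum_subtree_le (hT : T.IsTree) (D : V → ℕ) (u : V) :
    ∑ w ∈ subtree T ρ u, D w ≤
      gather T ρ D u * 2 ^ height T ρ u + descendantWeight T ρ u := by
  have hchild : ∀ c ∈ children T ρ u, ∑ w ∈ subtree T ρ c, D w ≤
      gather T ρ D c / 2 * 2 ^ height T ρ u + (2 ^ height T ρ c + descendantWeight T ρ c) := by
    intro c hc
    have := mul_two_pow_le_div_two_mul_two_pow_add (g := gather T ρ D c)
      (height_lt_of_mem_children hT hc)
    have := sum_subtree_le hT D c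
    omega
  have hpow : D u ≤ D u * 2 ^ height T ρ u := Nat.le_mul_of_pos_right _ (by positivity)
  calc ∑ w ∈ subtree T ρ u, D w
      = D u + ∑ c ∈ children T ρ u, ∑ w ∈ subtree T ρ c, D w := sum_subtree hT D u
    _ ≤ D u + ∑ c ∈ children T ρ u,
          (gather T ρ D c / 2 * 2 ^ height T ρ u +
            (2 ^ height T ρ c + descendantWeight T ρ c)) :=
        by gcongr with c hc; exact hchild c hc
    _ = D u + (∑ c ∈ children T ρ u, gather T ρ D c / 2) * 2 ^ height T ρ u +
          descendantWeight T ρ u := by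
        rw [sum_add_distrib, ← sum_mul, ← descendantWeight_eq_sum_children hT, add_assoc]
    _ ≤ gather T ρ D u * 2 ^ height T ρ u + descendantWeight T ρ u := by
        rw [gather_eq, add_mul]; omega
termination_by Fintype.card V - T.dist ρ u
decreasing_by exact card_sub_dist_lt_of_mem_children hc

lemma exists_extremal_of_children_eq_empty (hT : T.IsTree) {u : V}
    (hleaf : children T ρ u = ∅) (m : ℕ) :
    ∃ D : V → ℕ, (∀ x ∉ subtree T ρ u, D x = 0) ∧
      ∑ x, D x = m * 2 ^ height T ρ u + descendantWeight T ρ u ∧ gather T ρ D u ≤ m := by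
  refine ⟨Pi.single u m, fun x hx => ?_, ?_, ?_⟩
  · rw [Pi.single_eq_of_ne]; rintro rfl; exact hx (self_mem_subtree x)
  · rw [height_eq_zero_of_children_eq_empty hT hleaf, descendantWeight_eq_sum_children hT, hleaf]
    simp
  · rw [gather_eq, hleaf]; simp

lemma sum_ite_mul_two_pow_add_descendantWeight (hT : T.IsTree) {u c₀ : V}
    (hc₀ : c₀ ∈ children T ρ u) (hh : height T ρ c₀ + 1 = height T ρ u) (m : ℕ) :
    ∑ c ∈ children T ρ u,
        ((if c = c₀ then 2 * m + 1 else 1) * 2 ^ height T ρ c + descendantWeight T ρ c) =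
      m * 2 ^ height T ρ u + descendantWeight T ρ u := by
  have h : ∀ c,
      (if c = c₀ then 2 * m + 1 else 1) * 2 ^ height T ρ c + descendantWeight T ρ c =
        2 ^ height T ρ c + descendantWeight T ρ c +
          if c = c₀ then m * 2 ^ height T ρ u else 0 := by
    intro c
    by_cases hc : c = c₀
    · simp only [hc, if_true, ← hh, pow_succ]; ring
    · simp [hc]
  rw [sum_congr rfl fun c _ => h c, sum_add_distrib, sum_ite_eq' _ c₀, if_pos hc₀,
    descendantWeight_eq_sum_children hT]
  ring

/-- Below a deepest child the extremal distribution for `2 m + 1`, below every other child the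
one for `1`. -/
lemma exists_extremal (hT : T.IsTree) (u : V) (m : ℕ) :
    ∃ D : V → ℕ, (∀ x ∉ subtree T ρ u, D x = 0) ∧
      ∑ x, D x = m * 2 ^ height T ρ u + descendantWeight T ρ u ∧ gather T ρ D u ≤ m := by
  rcases (children T ρ u).eq_empty_or_nonempty with hleaf | hne
  · exact exists_extremal_of_children_eq_empty hT hleaf m
  obtain ⟨c₀, hc₀, hh⟩ := exists_height_add_one_eq hT u hne
  let a c := if c = c₀ then 2 * m + 1 else 1
  have hF : ∀ c ∈ children T ρ u, ∃ F : V → ℕ, (∀ x ∉ subtree T ρ c, F x = 0) ∧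
      ∑ x, F x = a c * 2 ^ height T ρ c + descendantWeight T ρ c ∧ gather T ρ F c ≤ a c :=
    fun c hc => exists_extremal hT c (a c)
  choose! F hF0 hFs hFg using hF
  have hDc : ∀ c ∈ children T ρ u, ∀ x ∈ subtree T ρ c,
      ∑ c' ∈ children T ρ u, F c' x = F c x :=
    fun c hc x hx => sum_eq_single_of_mem c hc fun c' hc' hne => hF0 c' hc' x fun hx' =>
      disjoint_left.mp (disjoint_subtree_of_mem_children hT hc hc' hne.symm) hx hx'
  refine ⟨fun x => ∑ c ∈ children T ρ u, F c x, fun x hx => ?_, ?_, ?_⟩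
  · refine sum_eq_zero fun c hc => hF0 c hc x fun hxc => hx ?_
    exact (mem_subtree_trans hT (mem_subtree_of_mem_children hc) hxc).1
  · rw [sum_comm, sum_congr rfl hFs, sum_ite_mul_two_pow_add_descendantWeight hT hc₀ hh]
  · have hDu : ∑ c ∈ children T ρ u, F c u = 0 :=
      sum_eq_zero fun c hc => hF0 c hc u (notMem_subtree_of_mem_children hc)
    have hgc : ∀ c ∈ children T ρ u,
        gather T ρ (fun x => ∑ c ∈ children T ρ u, F c x) c / 2 ≤
          if c = c₀ then m else 0 := by
      intro c hc
      rw [gather_congr hT c (hDc c hc)]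
      have := hFg c hc
      by_cases h : c = c₀ <;> simp only [a, h, if_true, if_false] at this ⊢ <;> omega
    calc gather T ρ (fun x => ∑ c ∈ children T ρ u, F c x) u
        ≤ 0 + ∑ c ∈ children T ρ u, if c = c₀ then m else 0 := by
          rw [gather_eq, hDu]; gcongr with c hc; exact hgc c hc
      _ = m := by rw [sum_ite_eq' _ c₀, if_pos hc₀, zero_add]
termination_by Fintype.card V - T.dist ρ u
decreasing_by exact card_sub_dist_lt_of_mem_children hc

lemma reaches_of_descendantWeight_lt (hT : T.IsTree) {D : V → ℕ}
    (h : descendantWeight T ρ ρ < ∑ x, D x) : Reaches T D ρ 1 := by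
  rw [reaches_iff_one_le_gather hT]
  by_contra! h0
  have := sum_subtree_le (ρ := ρ) hT D ρ
  rw [subtree_self, Nat.lt_one_iff.mp h0, zero_mul, zero_add] at this
  omega

lemma exists_not_reaches_of_le (hT : T.IsTree) {k : ℕ} (hk : k ≤ descendantWeight T ρ ρ) :
    ∃ D : V → ℕ, ∑ x, D x = k ∧ ¬Reaches T D ρ 1 := by
  obtain ⟨D₀, -, hsum, hg⟩ := exists_extremal (ρ := ρ) hT ρ 0
  obtain ⟨D, hle, hD⟩ := exists_le_sum_eq D₀ (k := k) (by omega)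
  refine ⟨D, hD, fun hr => ?_⟩
  have := (reaches_iff_one_le_gather hT D).mp hr
  have := gather_mono (T := T) (ρ := ρ) hle ρ
  omega

theorem pebNumTo_eq (hT : T.IsTree) (ρ : V) : pebNumTo T ρ = descendantWeight T ρ ρ + 1 := by
  refine IsLeast.csInf_eq
    ⟨fun D hD => reaches_of_descendantWeight_lt hT (by omega), fun k hk => ?_⟩
  by_contra! hlt
  obtain ⟨D, hD, hnot⟩ := exists_not_reaches_of_le hT (Nat.lt_succ_iff.mp hlt)
  exact hnot (hk D hD)

end Threshold

section Reflect

variable {T : SimpleGraph V}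

variable (T) in
/-- The reflection of the geodesic `q` from `v` to `r`, extended by the identity. -/
noncomputable def reflect {v r : V} (q : T.Walk v r) (x : V) : V :=
  if T.dist v x + T.dist x r = T.dist v r then q.getVert (T.dist x r) else x

variable {v r : V} {q : T.Walk v r}

lemma dist_reflect (hT : T.IsTree) (hq : q.length = T.dist v r) {x : V}
    (hx : T.dist v x + T.dist x r = T.dist v r) :
    T.dist v (reflect T q x) = T.dist x r ∧ T.dist (reflect T q x) r = T.dist v x := by
  rw [reflect, if_pos hx]
  obtain ⟨h₁, h₂⟩ :=
    q.dist_getVert_of_length_eq_dist hT.connected hq (i := T.dist x r) (by omega)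
  exact ⟨h₁, by omega⟩

lemma reflect_reflect (hT : T.IsTree) (hq : q.length = T.dist v r) (x : V) :
    reflect T q (reflect T q x) = x := by
  by_cases hx : T.dist v x + T.dist x r = T.dist v r
  · obtain ⟨h₁, h₂⟩ := dist_reflect hT hq hx
    have hx' : T.dist v (reflect T q x) + T.dist (reflect T q x) r = T.dist v r := by omega
    obtain ⟨h₃, h₄⟩ := dist_reflect hT hq hx'
    exact hT.eq_of_dist_eq (by omega) hx (by omega)
  · have hfix : reflect T q x = x := by rw [reflect, if_neg hx]
    rw [hfix, hfix]

lemma reflect_start (hT : T.IsTree) (hq : q.length = T.dist v r) : reflect T q v = r := by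
  have hv : T.dist v v + T.dist v r = T.dist v r := by simp
  obtain ⟨h₁, h₂⟩ := dist_reflect hT hq hv
  rw [dist_self] at h₂
  exact hT.eq_of_dist_eq (x := v) (z := r) (by omega) (by simp) h₁

end Reflect

section Peripheral

variable [Fintype V] {T : SimpleGraph V}

lemma height_eq_of_not_between (hT : T.IsTree) {v r x : V}
    (hx : T.dist v x + T.dist x r ≠ T.dist v r) : height T v x = height T r x := by
  have hsub : ∀ {a b},
      T.dist b x + T.dist x a ≠ T.dist b a → subtree T a x ⊆ subtree T b x := by
    intro a b hab y hy
    rw [mem_subtree] at *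
    exact ((hT.dist_add_dist_eq_or hy.symm b).resolve_left hab).symm
  have hx' : T.dist r x + T.dist x v ≠ T.dist r v := by
    have := T.dist_comm (u := r) (v := x); have := T.dist_comm (u := x) (v := v)
    have := T.dist_comm (u := r) (v := v)
    omega
  rw [height, height, subset_antisymm (hsub hx') (hsub hx)]

lemma height_le_height_of_dist_eq (hT : T.IsTree) {u r v w w' : V}
    (hr : ∀ a b, T.dist a b ≤ T.dist u r) (hw : T.dist v w + T.dist w r = T.dist v r)
    (hw' : T.dist v w' + T.dist w' r = T.dist v r) (hww' : T.dist v w = T.dist w' r) :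
    height T v w ≤ height T r w' := by
  obtain ⟨y, hy, hwy⟩ := exists_height_eq_dist (T := T) (ρ := v) w
  rw [mem_subtree] at hy
  rw [hwy]
  have := T.dist_comm (u := r) (v := w'); have := T.dist_comm (u := r) (v := w)
  have := T.dist_comm (u := r) (v := v); have := T.dist_comm (u := r) (v := y)
  have := T.dist_comm (u := w') (v := v)
  rcases le_or_gt (T.dist v y) (T.dist v r) with hvy | hvy
  · have := dist_le_height (show v ∈ subtree T r w' from mem_subtree.mpr (by omega))
    omega
  · have hyr : T.dist v y ≤ T.dist y r := by
      rcases le_max_iff.mp (hT.dist_le_max_of_forall_dist_le hr v y) with h | h <;> omega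
    obtain ⟨c, hcvr, hcvy, hcry⟩ := hT.exists_median v r y
    have := T.dist_comm (u := c) (v := w'); have := T.dist_comm (u := r) (v := c)
    have : T.dist r y ≤ T.dist r w + T.dist w y := hT.connected.dist_triangle
    have hcw' := hT.dist_add_dist_of_le hcvr hw' (by omega)
    have : T.dist w' y ≤ T.dist w' c + T.dist c y := hT.connected.dist_triangle
    have : T.dist r y ≤ T.dist r w' + T.dist w' y := hT.connected.dist_triangle
    have := dist_le_height (show y ∈ subtree T r w' from mem_subtree.mpr (by omega))
    omega

lemma height_le_height_reflect (hT : T.IsTree) {v r : V} {q : T.Walk v r}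
    (hq : q.length = T.dist v r) {u : V}
    (hr : ∀ a b, T.dist a b ≤ T.dist u r) (x : V) :
    height T v x ≤ height T r (reflect T q x) := by
  by_cases hx : T.dist v x + T.dist x r = T.dist v r
  · obtain ⟨h₁, h₂⟩ := dist_reflect hT hq hx
    exact height_le_height_of_dist_eq hT hr hx (by omega) h₂.symm
  · rw [reflect, if_neg hx]
    exact (height_eq_of_not_between hT hx).le

lemma descendantWeight_le_of_forall_dist_le [DecidableEq V] (hT : T.IsTree) {u r : V}
    (hr : ∀ a b, T.dist a b ≤ T.dist u r) (v : V) :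
    descendantWeight T v v ≤ descendantWeight T r r := by
  obtain ⟨q, -, hq⟩ := hT.connected.exists_path_of_dist v r
  have hinv := reflect_reflect hT hq
  have hv := reflect_start hT hq
  have hr' : reflect T q r = v := by simpa [hv] using hinv v
  have hmaps : ∀ {a b},
      reflect T q a = b → ∀ x ∈ univ.erase b, reflect T q x ∈ univ.erase a := by
    intro a b hab x hx
    refine mem_erase.mpr ⟨fun h => (mem_erase.mp hx).1 ?_, mem_univ _⟩
    rw [← hinv x, h, hab]
  rw [descendantWeight, descendantWeight, subtree_self, subtree_self]
  calc ∑ x ∈ univ.erase v, 2 ^ height T v x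
      ≤ ∑ x ∈ univ.erase v, 2 ^ height T r (reflect T q x) :=
        sum_le_sum fun x _ => Nat.pow_le_pow_right two_pos (height_le_height_reflect hT hq hr x)
    _ = ∑ x ∈ univ.erase r, 2 ^ height T r x :=
        sum_nbij' _ _ (hmaps hr') (hmaps hv) (fun x _ => hinv x)
          (fun x _ => hinv x) fun _ _ => rfl

end Peripheral

end TreePebbling

open TreePebbling in
theorem pebbling_number_at_peripheral_vertex [Fintype V] [DecidableEq V]
    (T : SimpleGraph V) (hT : T.IsTree) (r : V)
    (hr : ∃ u : V, ∃ p : T.Walk u r, p.IsPath ∧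
      ∀ (a b : V) (q : T.Walk a b), q.IsPath → q.length ≤ p.length) :
    pebNumTo T r = pebNum T := by
  obtain ⟨u, p, hp, hmax⟩ := hr
  have hdiam : ∀ a b, T.dist a b ≤ T.dist u r := fun a b => by
    obtain ⟨q, hq, hql⟩ := hT.connected.exists_path_of_dist a b
    rw [← hql, ← hT.length_eq_dist hp]
    exact hmax a b q hq
  rw [pebNumTo_eq hT r, pebNum, eq_comm]
  refine IsLeast.csInf_eq ⟨fun D hD v => reaches_of_descendantWeight_lt hT ?_, fun k hk => ?_⟩
  · have := descendantWeight_le_of_forall_dist_le hT hdiam v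
    omega
  · by_contra! hlt
    obtain ⟨D, hD, hnot⟩ := exists_not_reaches_of_le hT (Nat.lt_succ_iff.mp hlt)
    exact hnot (hk D hD r)
end

section
/- Smoothing preserves reachability: let D be a distribution on a graph G, v a vertex of degree 2 with D(v) ≥ 3, and u ≠ v. If u is m-reachable under D, then u is m-reachable under the distribution D' obtained from D by removing two pebbles from v and adding one pebble to each of the two neighbors of v. -/
set_option maxHeartbeats 1000000


open SimpleGraph

variable {V : Type*}

lemma valid_mono [DecidableEq V] (G : SimpleGraph V) :
    ∀ (l : List (V × V)) (D D' : V → ℕ), (∀ w, D w ≤ D' w) →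
    ValidSeq G D l → ValidSeq G D' l ∧ ∀ w, applySeq D l w ≤ applySeq D' l w
  | [], D, D', h, _ => ⟨trivial, h⟩
  | e :: t, D, D', h, ⟨hadj, h2, hv⟩ => by
    have hmono : ∀ w, applyMove D e w ≤ applyMove D' e w := by
      intro w
      unfold applyMove
      split_ifs
      · exact Nat.sub_le_sub_right (h w) 2
      · exact Nat.add_le_add_right (h w) 1
      · exact h w
    obtain ⟨hV, hle⟩ := valid_mono G t (applyMove D e) (applyMove D' e) hmono hv
    exact ⟨⟨hadj, h2.trans (h e.1), hV⟩, hle⟩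

lemma smooth_aux [DecidableEq V] (G : SimpleGraph V) (v a b : V)
    (hva : v ≠ a) (hvb : v ≠ b) (hab : a ≠ b)
    (hnb : ∀ e : V × V, e.1 = v → G.Adj e.1 e.2 → e.2 = a ∨ e.2 = b) :
    ∀ (l : List (V × V)) (D : V → ℕ), ValidSeq G D l → 2 ≤ D v →
    ∃ l', ValidSeq G (fun w => if w = v then D v - 2 else if w = a then D a + 1
        else if w = b then D b + 1 else D w) l' ∧
      ∀ w, w ≠ v → applySeq D l w ≤
        applySeq (fun w => if w = v then D v - 2 else if w = a then D a + 1
          else if w = b then D b + 1 else D w) l' w := by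
  intro l
  induction l with
  | nil =>
    intro D _ _
    refine ⟨[], trivial, fun w hw => ?_⟩
    show D w ≤ if w = v then D v - 2 else if w = a then D a + 1
        else if w = b then D b + 1 else D w
    rw [if_neg hw]
    split_ifs with h1 h2
    · subst h1; omega
    · subst h2; omega
    · exact le_refl _
  | cons e t ih =>
    intro D hval hDv
    obtain ⟨x, y⟩ := e
    obtain ⟨hadj, h2, hvt⟩ := hval
    simp only at hadj h2 hvt ⊢
    set S : V → ℕ := fun w => if w = v then D v - 2 else if w = a then D a + 1
        else if w = b then D b + 1 else D w with hS
    by_cases hev : x = v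
    · subst hev
      have he2 : y = a ∨ y = b := hnb (x, y) rfl hadj
      have hle : ∀ w, applyMove D (x, y) w ≤ S w := by
        intro w
        rcases he2 with h | h <;> subst h <;>
          simp only [applyMove, hS] <;> split_ifs <;> subst_vars <;> omega
      obtain ⟨hV, hb2⟩ := valid_mono G t (applyMove D (x, y)) S hle hvt
      exact ⟨t, hV, fun w _ => hb2 w⟩
    · have hDv' : 2 ≤ applyMove D (x, y) v := by
        simp only [applyMove]
        rw [if_neg (fun hh => hev hh.symm)]
        split_ifs <;> omega
      obtain ⟨l'', hV'', hb''⟩ := ih (applyMove D (x, y)) hvt hDv'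
      have hkey : (fun w => if w = v then applyMove D (x, y) v - 2
          else if w = a then applyMove D (x, y) a + 1
          else if w = b then applyMove D (x, y) b + 1 else applyMove D (x, y) w)
          = applyMove S (x, y) := by
        funext w
        simp only [applyMove, hS]
        rcases eq_or_ne w v with h|h <;> rcases eq_or_ne w a with h'|h' <;>
          rcases eq_or_ne w b with h''|h'' <;> rcases eq_or_ne w x with h3|h3 <;>
          rcases eq_or_ne w y with h4|h4 <;> simp_all <;> omega
      rw [hkey] at hV'' hb''
      refine ⟨(x, y) :: l'', ⟨hadj, ?_, hV''⟩, fun w hw => ?_⟩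
      · show 2 ≤ S x
        simp only [hS]
        split_ifs with h1 h2 h3 <;> subst_vars <;> omega
      · exact hb'' w hw


theorem smoothing_preserves_reachability [Fintype V] [DecidableEq V]
    (G : SimpleGraph V) [DecidableRel G.Adj] (D : V → ℕ) (v a b u : V)
    (hdeg : G.degree v = 2) (ha : G.Adj v a) (hb : G.Adj v b) (hab : a ≠ b)
    (hv : 3 ≤ D v) (hu : u ≠ v) (m : ℕ) (h : Reaches G D u m) :
    Reaches G
      (fun w => if w = v then D v - 2 else if w = a then D a + 1
        else if w = b then D b + 1 else D w) u m := by
  have hset : ({a, b} : Finset V) = G.neighborFinset v := by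
    apply Finset.eq_of_subset_of_card_le
    · intro x hx
      rcases Finset.mem_insert.1 hx with rfl | hx
      · exact (mem_neighborFinset G v x).2 ha
      · rw [Finset.mem_singleton] at hx
        subst hx
        exact (mem_neighborFinset G v x).2 hb
    · rw [Finset.card_pair hab]
      exact le_of_eq hdeg
  have hnb : ∀ e : V × V, e.1 = v → G.Adj e.1 e.2 → e.2 = a ∨ e.2 = b := by
    intro e h1 h2
    rw [h1] at h2
    have hmem : e.2 ∈ G.neighborFinset v := (mem_neighborFinset G v e.2).2 h2
    rw [← hset] at hmem
    rcases Finset.mem_insert.1 hmem with h | h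
    · exact Or.inl h
    · exact Or.inr (Finset.mem_singleton.1 h)
  obtain ⟨l, hval, hm⟩ := h
  obtain ⟨l', hV, hle⟩ := smooth_aux G v a b ha.ne hb.ne hab hnb l D hval (by omega)
  exact ⟨l', hV, hm.trans (hle u hu)⟩
end

section
/- The optimal pebbling number of the n-vertex path and of the n-vertex cycle both equal ⌈2n/3⌉: π_OPT(P_n) = π_OPT(C_n) = ⌈2n/3⌉. -/
open SimpleGraph

variable {V : Type*}

/-!
Lower bound. No pebbling move increases `cyclePotential D r`, the pebbles on `r` plus what greedy
moves clockwise and counterclockwise around the cycle can bring to `r`; so in a solvable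
distribution every vertex has potential at least one. Unroll the cycle periodically onto a long
line: every position away from the ends then holds a pebble or receives one from a greedy scan
from the left or from the right. On a line `k` pebbles cover at most `3k/2` positions: taking two
pebbles from the leftmost occupied position `s` uncovers at most one position left of `s`, `s`
itself and one position right of `s`, and taking a lone pebble from `s` uncovers at most one.

Upper bound. Two pebbles on every third vertex of the path, plus one on the last vertex when
`n ≡ 1 (mod 3)`, reach every vertex in at most one move, and `P_n ⊆ C_n`.
-/

open Finset

section Pebbling

variable [DecidableEq V] {G H : SimpleGraph V}

theorem ValidSeq.mono (hGH : G ≤ H) {D : V → ℕ} {l : List (V × V)} (h : ValidSeq G D l) :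
    ValidSeq H D l := by
  induction l generalizing D with
  | nil => trivial
  | cons e l ih => exact ⟨hGH h.1, h.2.1, ih h.2.2⟩

theorem Solvable.mono (hGH : G ≤ H) {D : V → ℕ} (h : Solvable G D) : Solvable H D := fun r =>
  let ⟨l, hl, hr⟩ := h r
  ⟨l, hl.mono hGH, hr⟩

theorem Reaches.of_adj {D : V → ℕ} {u r : V} (hur : G.Adj u r) (hu : 2 ≤ D u) :
    Reaches G D r 1 :=
  ⟨[(u, r)], ⟨hur, hu, trivial⟩, by simp [applySeq, applyMove, hur.ne.symm]⟩

theorem Reaches.le_of_antitone {Φ : (V → ℕ) → ℕ} {r : V} (hr : ∀ D, D r ≤ Φ D)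
    (hΦ : ∀ D a b, G.Adj a b → 2 ≤ D a → Φ (applyMove D (a, b)) ≤ Φ D) {D : V → ℕ} {m : ℕ}
    (h : Reaches G D r m) : m ≤ Φ D := by
  obtain ⟨l, hl, hm⟩ := h
  refine hm.trans ?_
  clear hm
  induction l generalizing D with
  | nil => exact hr D
  | cons e l ih => exact (ih hl.2.2).trans (hΦ D e.1 e.2 hl.1 hl.2.1)

theorem optPebNum_eq [Fintype V] {k : ℕ} (hk : ∃ D : V → ℕ, ∑ v, D v = k ∧ Solvable G D)
    (hle : ∀ D : V → ℕ, Solvable G D → k ≤ ∑ v, D v) : optPebNum G = k :=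
  (Nat.sInf_le hk).antisymm (le_csInf ⟨k, hk⟩ fun _ ⟨D, hD, hs⟩ => hD ▸ hle D hs)

theorem applyMove_comp {W : Type*} [DecidableEq W] (D : V → ℕ) {f : W → V} {g : V → W} {w : W}
    (h : ∀ x, f w = x ↔ w = g x) (a b : V) :
    applyMove D (a, b) (f w) = applyMove (D ∘ f) (g a, g b) w := by
  simp only [applyMove, h, Function.comp]

end Pebbling

section Line

/-- The number of pebbles greedy moves to the right can bring onto position `m` from positions
`0, …, m - 1`. -/
def leftSupply (D : ℕ → ℕ) : ℕ → ℕ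
  | 0 => 0
  | m + 1 => (leftSupply D m + D m) / 2

variable {D D' : ℕ → ℕ} {m : ℕ}

@[simp] theorem leftSupply_zero : leftSupply D 0 = 0 := rfl

theorem leftSupply_succ (D : ℕ → ℕ) (m : ℕ) :
    leftSupply D (m + 1) = (leftSupply D m + D m) / 2 := rfl

theorem leftSupply_le_add_of_le {a c : ℕ} (ham : a ≤ m)
    (hbase : leftSupply D a ≤ leftSupply D' a + c) (h : ∀ i, a ≤ i → i < m → D i ≤ D' i) :
    leftSupply D m ≤ leftSupply D' m + c := by
  induction m, ham using Nat.le_induction with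
  | base => exact hbase
  | succ m ham ih =>
    have := ih fun i hai him => h i hai (by omega)
    have := h m ham (by omega)
    rw [leftSupply_succ, leftSupply_succ]
    omega

theorem leftSupply_mono (h : ∀ i < m, D i ≤ D' i) : leftSupply D m ≤ leftSupply D' m :=
  leftSupply_le_add_of_le (c := 0) (Nat.zero_le m) le_rfl fun i _ him => h i him

theorem leftSupply_congr (h : ∀ i < m, D i = D' i) : leftSupply D m = leftSupply D' m :=
  (leftSupply_mono fun i hi => (h i hi).le).antisymm (leftSupply_mono fun i hi => (h i hi).ge)

theorem leftSupply_le_add_one (s : ℕ) (hne : ∀ i < m, i ≠ s → D i ≤ D' i)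
    (hs : D s ≤ D' s + 2) : leftSupply D m ≤ leftSupply D' m + 1 := by
  by_cases hms : m ≤ s
  · exact (leftSupply_mono fun i hi => hne i hi (by omega)).trans (Nat.le_add_right _ _)
  · have hbase : leftSupply D (s + 1) ≤ leftSupply D' (s + 1) + 1 := by
      have := leftSupply_mono (m := s) fun i hi => hne i (by omega) (by omega)
      rw [leftSupply_succ, leftSupply_succ]
      omega
    exact leftSupply_le_add_of_le (by omega) hbase fun i hi him => hne i him (by omega)

theorem leftSupply_add_eq_div {a : ℕ} (d : ℕ) (h : ∀ i, a ≤ i → i < a + d → D i = 0) :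
    leftSupply D (a + d) = leftSupply D a / 2 ^ d := by
  induction d with
  | zero => simp
  | succ d ih =>
    rw [← add_assoc, leftSupply_succ, ih fun i hai hid => h i hai (by omega),
      h (a + d) (by omega) (by omega), add_zero, Nat.div_div_eq_div_mul, pow_succ]

theorem leftSupply_eq_zero (h : ∀ i < m, D i = 0) : leftSupply D m = 0 := by
  simpa using leftSupply_add_eq_div (a := 0) m fun i _ him => h i (by omega)

theorem leftSupply_comp_add_le (a : ℕ) :
    leftSupply (fun i => D (a + i)) m ≤ leftSupply D (a + m) := by
  induction m with
  | zero => simp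
  | succ m ih =>
    rw [leftSupply_succ, ← add_assoc, leftSupply_succ]
    omega

theorem leftSupply_applyMove_le_add_one {j k : ℕ} :
    leftSupply (applyMove D (j, k)) m ≤ leftSupply D m + 1 :=
  leftSupply_le_add_one k (fun i _ hik => by unfold applyMove; split_ifs <;> omega)
    (by unfold applyMove; split_ifs <;> omega)

theorem leftSupply_applyMove_le_of_le {j k : ℕ} (hkm : m ≤ k) :
    leftSupply (applyMove D (j, k)) m ≤ leftSupply D m :=
  leftSupply_mono fun i hi => by unfold applyMove; split_ifs <;> omega

theorem leftSupply_applyMove_le {j k : ℕ} (h2 : 2 ≤ D j) (hjm : j < m) (hkm : k < m)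
    (hjk : j + 1 = k ∨ k + 1 = j) : leftSupply (applyMove D (j, k)) m ≤ leftSupply D m := by
  obtain ⟨p, hp⟩ : ∃ p, j + k = 2 * p + 1 := ⟨min j k, by omega⟩
  have hbelow : leftSupply (applyMove D (j, k)) p = leftSupply D p :=
    leftSupply_congr fun i hi => by unfold applyMove; rw [if_neg (by omega), if_neg (by omega)]
  have hbase : leftSupply (applyMove D (j, k)) (p + 2) ≤ leftSupply D (p + 2) + 0 := by
    rw [leftSupply_succ, leftSupply_succ, leftSupply_succ _ (p + 1), leftSupply_succ _ p, hbelow]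
    dsimp only [applyMove]
    split_ifs <;> subst_vars <;> omega
  exact leftSupply_le_add_of_le (by omega) hbase fun i hi _ => by
    unfold applyMove; rw [if_neg (by omega), if_neg (by omega)]

theorem leftSupply_applyMove_add_one {j k : ℕ} (h2 : 2 ≤ D j) (hjm : j + 1 = m) (hkm : m ≤ k) :
    leftSupply (applyMove D (j, k)) m + 1 = leftSupply D m := by
  subst hjm
  have hbelow : leftSupply (applyMove D (j, k)) j = leftSupply D j :=
    leftSupply_congr fun i hi => by unfold applyMove; rw [if_neg (by omega), if_neg (by omega)]
  rw [leftSupply_succ, leftSupply_succ, hbelow]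
  dsimp only [applyMove]
  rw [if_pos rfl]
  omega

/-- The mirror image of `leftSupply`: the pebbles that greedy moves to the left can bring onto
position `r` from positions `r + 1, …, M - 1`. -/
def rightSupply (D : ℕ → ℕ) (M r : ℕ) : ℕ := leftSupply (fun i => D (M - 1 - i)) (M - 1 - r)

variable {M r : ℕ}

theorem rightSupply_succ (h : r + 1 < M) :
    rightSupply D M r = (D (r + 1) + rightSupply D M (r + 1)) / 2 := by
  unfold rightSupply
  rw [show M - 1 - r = M - 1 - (r + 1) + 1 by omega, leftSupply_succ,
    show M - 1 - (M - 1 - (r + 1)) = r + 1 by omega, add_comm]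

theorem rightSupply_mono (h : ∀ i, r < i → i < M → D i ≤ D' i) :
    rightSupply D M r ≤ rightSupply D' M r :=
  leftSupply_mono fun i hi => h _ (by omega) (by omega)

theorem rightSupply_congr (h : ∀ i, r < i → i < M → D i = D' i) :
    rightSupply D M r = rightSupply D' M r :=
  leftSupply_congr fun i hi => h _ (by omega) (by omega)

theorem rightSupply_le_add_one (s : ℕ) (hne : ∀ i ≠ s, D i ≤ D' i) (hs : D s ≤ D' s + 2) :
    rightSupply D M r ≤ rightSupply D' M r + 1 := by
  by_cases hsM : s < M
  · exact leftSupply_le_add_one (M - 1 - s) (fun i _ his => hne _ (by omega))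
      (by rwa [show M - 1 - (M - 1 - s) = s by omega])
  · exact (rightSupply_mono fun i _ hiM => hne i (by omega)).trans (Nat.le_add_right _ _)

theorem rightSupply_eq_zero (h : ∀ i, r < i → i < M → D i = 0) : rightSupply D M r = 0 :=
  leftSupply_eq_zero fun i hi => h _ (by omega) (by omega)

theorem rightSupply_eq_div {x y : ℕ} (hxy : x ≤ y) (hyM : y < M)
    (h : ∀ i, x < i → i ≤ y → D i = 0) :
    rightSupply D M x = rightSupply D M y / 2 ^ (y - x) := by
  unfold rightSupply
  rw [show M - 1 - x = M - 1 - y + (y - x) by omega]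
  exact leftSupply_add_eq_div _ fun i hi hi' => h _ (by omega) (by omega)

def IsCovered (D : ℕ → ℕ) (M r : ℕ) : Prop :=
  1 ≤ D r ∨ 1 ≤ leftSupply D r ∨ 1 ≤ rightSupply D M r

instance (D : ℕ → ℕ) (M : ℕ) : DecidablePred (IsCovered D M) := fun _ => by
  unfold IsCovered; infer_instance

namespace IsCovered

variable {s : ℕ}

theorem one_le_rightSupply (hzero : ∀ i < s, D i = 0) {x : ℕ} (hxs : x < s)
    (hx : IsCovered D M x) : 1 ≤ rightSupply D M x := by
  rcases hx with hx | hx | hx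
  · rw [hzero x hxs] at hx; omega
  · rw [leftSupply_eq_zero fun i hi => hzero i (by omega)] at hx; omega
  · exact hx

/-! In the rest of this namespace `D'` is `D` with two pebbles (or its only pebble) removed from
its leftmost occupied position `s`. -/

theorem of_lt_of_lt (hzero : ∀ i < s, D i = 0) (hs : D' s = D s - 2)
    (hne : ∀ i ≠ s, D' i = D i) {x y : ℕ} (hxy : x < y) (hys : y < s) (hsM : s < M)
    (hx : IsCovered D M x) : IsCovered D' M y := by
  have hx := one_le_rightSupply hzero (hxy.trans hys) hx
  rw [rightSupply_eq_div hxy.le (by omega) fun i _ hiy => hzero i (by omega)] at hx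
  have hy : 2 ^ (y - x) ≤ rightSupply D M y := (Nat.one_le_div_iff (by positivity)).1 hx
  have h2 : 2 ≤ 2 ^ (y - x) := Nat.le_self_pow (by omega) 2
  have := rightSupply_le_add_one (M := M) (r := y) s (fun i hi => (hne i hi).ge) (by omega)
  exact .inr (.inr (by omega))

theorem of_lt_of_not (hs : D' s = D s - 2) (hne : ∀ i ≠ s, D' i = D i) {x y : ℕ}
    (hsx : s < x) (hxy : x < y) (hx : ¬IsCovered D' M x) (hy : IsCovered D M y) :
    IsCovered D' M y := by
  simp only [IsCovered, not_or, not_le, Nat.lt_one_iff] at hx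
  obtain ⟨hDx, hLx, -⟩ := hx
  have hLx1 : leftSupply D x ≤ 1 := by
    have := leftSupply_le_add_one (m := x) s (fun i _ hi => (hne i hi).ge) (by omega)
    omega
  have hLy : leftSupply D y ≤ leftSupply D' y + 0 := by
    refine leftSupply_le_add_of_le (a := x + 1) hxy ?_ fun i hi _ => (hne i (by omega)).ge
    rw [leftSupply_succ, leftSupply_succ, ← hne x (by omega), hDx]
    omega
  rcases hy with hy | hy | hy
  · exact .inl (by rwa [hne y (by omega)])
  · exact .inr (.inl (by omega))
  · exact .inr (.inr (by rwa [rightSupply_congr fun i hi _ => hne i (by omega)]))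

theorem of_lt_of_eq_one (hzero : ∀ i < s, D i = 0) (hne : ∀ i ≠ s, D' i = D i) (h1 : D s = 1)
    {x : ℕ} (hsx : s < x) (hx : IsCovered D M x) : IsCovered D' M x := by
  have hL : leftSupply D x ≤ leftSupply D' x + 0 := by
    refine leftSupply_le_add_of_le (a := s + 1) hsx ?_ fun i hi _ => (hne i (by omega)).ge
    rw [leftSupply_succ, leftSupply_eq_zero hzero, h1]
    omega
  rcases hx with hx | hx | hx
  · exact .inl (by rwa [hne x (by omega)])
  · exact .inr (.inl (by omega))
  · exact .inr (.inr (by rwa [rightSupply_congr fun i hi _ => hne i (by omega)]))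

theorem self_of_eq_one (hzero : ∀ i < s, D i = 0) (hne : ∀ i ≠ s, D' i = D i) (h1 : D s = 1)
    (hsM : s < M) {x : ℕ} (hxs : x < s) (hx : IsCovered D M x) : IsCovered D' M s := by
  have hx := one_le_rightSupply hzero hxs hx
  rw [rightSupply_eq_div (y := s - 1) (by omega) (by omega) fun i _ hi => hzero i (by omega),
    rightSupply_succ (by omega), Nat.sub_add_cancel (by omega), h1] at hx
  have : 1 ≤ rightSupply D M s := Nat.one_le_iff_ne_zero.2 fun h0 => by simp [h0] at hx
  exact .inr (.inr (by rwa [rightSupply_congr fun i hi _ => hne i (by omega)]))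

theorem two_mul_card_uncovered_le (hzero : ∀ i < s, D i = 0) (hs : D' s = D s - 2)
    (hne : ∀ i ≠ s, D' i = D i) (hsM : s < M) (hpos : 1 ≤ D s) :
    2 * #{x ∈ range M | IsCovered D M x ∧ ¬IsCovered D' M x} ≤ 3 * (D s - D' s) := by
  set K := {x ∈ range M | IsCovered D M x ∧ ¬IsCovered D' M x}
  have hK : ∀ x ∈ K, IsCovered D M x ∧ ¬IsCovered D' M x := fun x hx => (mem_filter.1 hx).2
  have card_le_one {t : Finset ℕ} (ht : t ⊆ K)
      (h : ∀ x ∈ t, ∀ y ∈ t, x < y → IsCovered D' M y) : #t ≤ 1 := by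
    refine card_le_one.2 fun x hx y hy => le_antisymm ?_ ?_ <;> refine not_lt.1 fun hlt => ?_
    · exact (hK x (ht hx)).2 (h y hy x hx hlt)
    · exact (hK y (ht hy)).2 (h x hx y hy hlt)
  rcases hpos.eq_or_lt with h1 | h2
  · have : #K ≤ 1 := card_le_one subset_rfl fun x hx y hy hxy => by
      rcases lt_trichotomy y s with hys | rfl | hsy
      · exact of_lt_of_lt hzero hs hne hxy hys hsM (hK x hx).1
      · exact self_of_eq_one hzero hne h1.symm hsM hxy (hK x hx).1
      · exact of_lt_of_eq_one hzero hne h1.symm hsy (hK y hy).1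
    omega
  · have hsplit : K ⊆ {x ∈ K | x < s} ∪ {s} ∪ {x ∈ K | s < x} := fun x hx => by
      rcases lt_trichotomy x s with h | rfl | h <;> simp [*]
    have hleft : #{x ∈ K | x < s} ≤ 1 := card_le_one (filter_subset _ _) fun x hx y hy hxy =>
      of_lt_of_lt hzero hs hne hxy (mem_filter.1 hy).2 hsM (hK x (mem_filter.1 hx).1).1
    have hright : #{x ∈ K | s < x} ≤ 1 := card_le_one (filter_subset _ _) fun x hx y hy hxy =>
      of_lt_of_not hs hne (mem_filter.1 hx).2 hxy (hK x (mem_filter.1 hx).1).2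
        (hK y (mem_filter.1 hy).1).1
    have := (card_le_card hsplit).trans
      ((card_union_le _ _).trans (Nat.add_le_add_right (card_union_le _ _) _))
    rw [card_singleton] at this
    omega

end IsCovered

theorem two_mul_card_isCovered_le (M : ℕ) (D : ℕ → ℕ) :
    2 * #{r ∈ range M | IsCovered D M r} ≤ 3 * ∑ i ∈ range M, D i := by
  induction hk : ∑ i ∈ range M, D i using Nat.strong_induction_on generalizing D with
  | _ k ih =>
  by_cases hex : ∃ s, s < M ∧ 1 ≤ D s
  · classical
    obtain ⟨hsM, hpos⟩ := Nat.find_spec hex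
    set s := Nat.find hex
    have hzero : ∀ i < s, D i = 0 := fun i hi => by
      have := Nat.find_min hex hi
      omega
    set D' := Function.update D s (D s - 2)
    have hs : D' s = D s - 2 := Function.update_self ..
    have hne : ∀ i ≠ s, D' i = D i := fun i hi => Function.update_of_ne hi ..
    have hsum : ∑ i ∈ range M, D i = ∑ i ∈ range M, D' i + (D s - D' s) := by
      rw [sum_update_of_mem (mem_range.2 hsM),
        sum_eq_add_sum_sdiff_singleton_of_mem (mem_range.2 hsM)]
      omega
    have hsub : {r ∈ range M | IsCovered D M r} ⊆
        {r ∈ range M | IsCovered D' M r} ∪ {r ∈ range M | IsCovered D M r ∧ ¬IsCovered D' M r} :=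
      fun r hr => by by_cases h : IsCovered D' M r <;> simp_all
    have := ih _ (by omega) D' rfl
    have := IsCovered.two_mul_card_uncovered_le hzero hs hne hsM hpos
    have := (card_le_card hsub).trans (card_union_le _ _)
    omega
  · simp only [not_exists, not_and, not_le] at hex
    have hzero : ∀ i < M, D i = 0 := fun i hi => by have := hex i hi; omega
    have : {r ∈ range M | IsCovered D M r} = ∅ := filter_eq_empty_iff.2 fun r hr => by
      have hrM := mem_range.1 hr
      simp only [IsCovered, hzero r hrM, leftSupply_eq_zero (m := r) fun i hi => hzero i (by omega),
        rightSupply_eq_zero fun i _ hi => hzero i hi]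
      omega
    simp [this]

end Line

section Cycle

open Fin.CommRing

variable {n : ℕ} [NeZero n]

theorem Fin.natCast_sub_one : ((n - 1 : ℕ) : Fin n) = -1 := by
  rw [eq_neg_iff_add_eq_zero, ← Nat.cast_add_one, Nat.sub_add_cancel NeZero.one_le,
    Fin.natCast_self]

theorem Fin.eq_one_of_val_eq_one {x : Fin n} (h : x.val = 1) : x = 1 :=
  Fin.ext (by rw [h, Fin.val_one', Nat.mod_eq_of_lt (by omega)])

theorem cycleGraph_adj_iff (hn : 2 ≤ n) {a b : Fin n} :
    (cycleGraph n).Adj a b ↔ a - b = 1 ∨ b - a = 1 := by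
  rw [cycleGraph_adj']
  constructor
  · rintro (h | h)
    exacts [.inl (Fin.eq_one_of_val_eq_one h), .inr (Fin.eq_one_of_val_eq_one h)]
  · rintro (h | h) <;> simp [h, Nat.mod_eq_of_lt (show 1 < n by omega)]

/-- `ray D r s i` is the number of pebbles on `r + s (i + 1)`, for `s = ±1`. Index `n - 1` is `r`
itself, so `leftSupply (ray D r s) (n - 1)` counts the pebbles that greedy moves in direction `s`
bring around the cycle onto `r`. -/
def ray (D : Fin n → ℕ) (r s : Fin n) (i : ℕ) : ℕ := D (r + s * ((i : Fin n) + 1))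

def rayIdx (r s x : Fin n) : ℕ := (s * (x - r) - 1).val

def cyclePotential (D : Fin n → ℕ) (r : Fin n) : ℕ :=
  D r + leftSupply (ray D r 1) (n - 1) + leftSupply (ray D r (-1)) (n - 1)

variable {r s : Fin n}

theorem add_mul_eq_iff_eq_rayIdx (hs : s * s = 1) {i : ℕ} (hi : i < n) (x : Fin n) :
    r + s * ((i : Fin n) + 1) = x ↔ i = rayIdx r s x := by
  rw [rayIdx, ← Fin.val_cast_of_lt hi, Fin.val_inj, Fin.cast_val_eq_self]
  constructor <;> intro h
  · linear_combination s * h - ((i : Fin n) + 1) * hs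
  · linear_combination s * h + (x - r) * hs

theorem rayIdx_lt (x : Fin n) : rayIdx r s x < n := Fin.isLt _

theorem ray_rayIdx (hs : s * s = 1) (D : Fin n → ℕ) (x : Fin n) :
    ray D r s (rayIdx r s x) = D x :=
  congrArg D ((add_mul_eq_iff_eq_rayIdx hs (rayIdx_lt x) x).2 rfl)

theorem rayIdx_eq_sub_one_iff (hs : s * s = 1) {x : Fin n} : rayIdx r s x = n - 1 ↔ x = r := by
  rw [eq_comm, ← add_mul_eq_iff_eq_rayIdx hs (by have := NeZero.one_le (n := n); omega),
    Fin.natCast_sub_one, neg_add_cancel, mul_zero, add_zero, eq_comm]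

theorem rayIdx_sub_self (hs : s * s = 1) (hn : 2 ≤ n) : rayIdx r s (r - s) = n - 2 := by
  rw [eq_comm, ← add_mul_eq_iff_eq_rayIdx hs (by omega), ← Nat.cast_add_one,
    show n - 2 + 1 = n - 1 by omega, Fin.natCast_sub_one]
  ring

theorem rayIdx_adj (hs : s = 1 ∨ s = -1) {a b : Fin n} (hab : (cycleGraph n).Adj a b)
    (ha : a ≠ r) (hb : b ≠ r) :
    rayIdx r s a + 1 = rayIdx r s b ∨ rayIdx r s b + 1 = rayIdx r s a := by
  have hss : s * s = 1 := by rcases hs with rfl | rfl <;> simp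
  have hn : 2 ≤ n := by have := hab.ne; omega
  have hj := (rayIdx_eq_sub_one_iff (r := r) hss).not.2 ha
  have hk := (rayIdx_eq_sub_one_iff (r := r) hss).not.2 hb
  have hja := (add_mul_eq_iff_eq_rayIdx (r := r) hss (rayIdx_lt a) a).2 rfl
  have hkb := (add_mul_eq_iff_eq_rayIdx (r := r) hss (rayIdx_lt b) b).2 rfl
  have := rayIdx_lt (r := r) (s := s) a
  have := rayIdx_lt (r := r) (s := s) b
  set j := rayIdx r s a
  set k := rayIdx r s b
  have hcast : ((j + 1 : ℕ) : Fin n) = k ∨ ((k + 1 : ℕ) : Fin n) = j := by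
    push_cast
    rcases hs with rfl | rfl <;> rcases (cycleGraph_adj_iff hn).1 hab with h | h
    · exact .inr (by linear_combination hkb - hja - h)
    · exact .inl (by linear_combination hja - hkb - h)
    · exact .inl (by linear_combination hkb - hja - h)
    · exact .inr (by linear_combination hja - hkb - h)
  rcases hcast with h | h <;> replace h := congrArg Fin.val h <;>
    rw [Fin.val_cast_of_lt (by omega), Fin.val_cast_of_lt (by omega)] at h <;> omega

theorem ray_applyMove (hs : s * s = 1) (D : Fin n → ℕ) (a b : Fin n) {i : ℕ} (hi : i < n) :
    ray (applyMove D (a, b)) r s i = applyMove (ray D r s) (rayIdx r s a, rayIdx r s b) i :=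
  applyMove_comp (f := fun j : ℕ => r + s * ((j : Fin n) + 1)) D
    (add_mul_eq_iff_eq_rayIdx hs hi) a b

theorem leftSupply_ray_applyMove_le_add_one (hs : s * s = 1) (D : Fin n → ℕ) (a b : Fin n) :
    leftSupply (ray (applyMove D (a, b)) r s) (n - 1) ≤ leftSupply (ray D r s) (n - 1) + 1 := by
  rw [leftSupply_congr fun i hi => ray_applyMove hs D a b (by omega)]
  exact leftSupply_applyMove_le_add_one

theorem leftSupply_ray_applyMove_le (hs : s = 1 ∨ s = -1) {D : Fin n → ℕ} {a b : Fin n}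
    (hab : (cycleGraph n).Adj a b) (hD : 2 ≤ D a) (ha : a ≠ r) :
    leftSupply (ray (applyMove D (a, b)) r s) (n - 1) ≤ leftSupply (ray D r s) (n - 1) := by
  have hss : s * s = 1 := by rcases hs with rfl | rfl <;> simp
  rw [leftSupply_congr fun i hi => ray_applyMove hss D a b (by omega)]
  by_cases hb : b = r
  · exact leftSupply_applyMove_le_of_le ((rayIdx_eq_sub_one_iff hss).2 hb).ge
  · have hj := (rayIdx_eq_sub_one_iff (r := r) hss).not.2 ha
    have hk := (rayIdx_eq_sub_one_iff (r := r) hss).not.2 hb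
    have := rayIdx_lt (r := r) (s := s) a
    have := rayIdx_lt (r := r) (s := s) b
    exact leftSupply_applyMove_le (by rwa [ray_rayIdx hss]) (by omega) (by omega)
      (rayIdx_adj hs hab ha hb)

theorem leftSupply_ray_applyMove_add_one (hs : s * s = 1) {D : Fin n → ℕ} (hn : 2 ≤ n)
    (hD : 2 ≤ D (r - s)) :
    leftSupply (ray (applyMove D (r - s, r)) r s) (n - 1) + 1 =
      leftSupply (ray D r s) (n - 1) := by
  rw [leftSupply_congr fun i hi => ray_applyMove hs D _ _ (by omega)]
  exact leftSupply_applyMove_add_one (by rwa [ray_rayIdx hs])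
    (by rw [rayIdx_sub_self hs hn]; omega) ((rayIdx_eq_sub_one_iff hs).2 rfl).ge

theorem cyclePotential_applyMove_le {D : Fin n → ℕ} {a b : Fin n}
    (hab : (cycleGraph n).Adj a b) (hD : 2 ≤ D a) (r : Fin n) :
    cyclePotential (applyMove D (a, b)) r ≤ cyclePotential D r := by
  have hn : 2 ≤ n := by have := hab.ne; omega
  have hpos : 1 * 1 = (1 : Fin n) := mul_one 1
  have hneg : -1 * -1 = (1 : Fin n) := by simp
  unfold cyclePotential
  by_cases ha : a = r
  · subst ha
    have := leftSupply_ray_applyMove_le_add_one (r := a) hpos D a b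
    have := leftSupply_ray_applyMove_le_add_one (r := a) hneg D a b
    simp only [applyMove, if_pos]
    omega
  have h₁ := leftSupply_ray_applyMove_le (r := r) (.inl rfl) hab hD ha
  have h₂ := leftSupply_ray_applyMove_le (r := r) (.inr rfl) hab hD ha
  by_cases hb : b = r
  · subst hb
    have hr : applyMove D (a, b) b = D b + 1 := by simp [applyMove, Ne.symm ha]
    rw [hr]
    rcases (cycleGraph_adj_iff hn).1 hab with h | h
    · obtain rfl : a = b - -1 := by linear_combination h
      have := leftSupply_ray_applyMove_add_one hneg hn hD
      omega
    · obtain rfl : a = b - 1 := by linear_combination -h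
      have := leftSupply_ray_applyMove_add_one hpos hn hD
      omega
  · have hr : applyMove D (a, b) r = D r := by simp [applyMove, Ne.symm ha, Ne.symm hb]
    omega

theorem one_le_cyclePotential_of_solvable {D : Fin n → ℕ} (hD : Solvable (cycleGraph n) D)
    (r : Fin n) : 1 ≤ cyclePotential D r :=
  (hD r).le_of_antitone (Φ := fun D => cyclePotential D r)
    (fun D => by unfold cyclePotential; omega)
    fun _ _ _ hab ha => cyclePotential_applyMove_le hab ha r

/-- `fun i : ℕ => D i` is the cycle unrolled periodically onto a line. -/
theorem isCovered_of_one_le_cyclePotential (D : Fin n → ℕ) {M p : ℕ} (hp : n ≤ p + 1)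
    (hpM : p + n ≤ M) (h : 1 ≤ cyclePotential D p) : IsCovered (fun i : ℕ => D i) M p := by
  have hn := NeZero.one_le (n := n)
  have hleft : leftSupply (ray D p 1) (n - 1) ≤ leftSupply (fun i : ℕ => D i) p := by
    rw [leftSupply_congr (D' := fun i => D ((p - (n - 1) + i : ℕ) : Fin n)) fun i _ => by
      simp only [ray]; congr 1
      push_cast [Nat.cast_sub (by omega : n - 1 ≤ p), Fin.natCast_sub_one]; ring]
    simpa [Nat.sub_add_cancel (by omega : n - 1 ≤ p)] using
      leftSupply_comp_add_le (D := fun i : ℕ => D i) (m := n - 1) (p - (n - 1))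
  have hright : leftSupply (ray D p (-1)) (n - 1) ≤ rightSupply (fun i : ℕ => D i) M p := by
    rw [leftSupply_congr (D' := fun i => D ((M - 1 - (M - p - n + i) : ℕ) : Fin n)) fun i hi => by
      simp only [ray]; congr 1
      rw [show M - 1 - (M - p - n + i) = p + (n - 1 - i) by omega]
      push_cast [Nat.cast_sub (by omega : i ≤ n - 1), Fin.natCast_sub_one]; ring]
    unfold rightSupply
    rw [show M - 1 - p = M - p - n + (n - 1) by omega]
    exact leftSupply_comp_add_le (D := fun i => D ((M - 1 - i : ℕ) : Fin n)) _
  unfold cyclePotential at h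
  simp only [IsCovered]
  omega

theorem sum_range_mul_natCast (D : Fin n → ℕ) (N : ℕ) :
    ∑ i ∈ range (N * n), D i = N * ∑ v, D v := by
  have hturn : ∑ i ∈ range n, D i = ∑ v, D v := by
    rw [← Fin.sum_univ_eq_sum_range (fun i : ℕ => D i)]
    simp only [Fin.cast_val_eq_self]
  induction N with
  | zero => simp
  | succ N ih =>
    rw [add_mul, one_mul, sum_range_add, ih, add_mul, one_mul, ← hturn]
    simp

/-- Unrolling `4n + 1` turns leaves at most `2n` positions uncovered, near the ends, so
`(4n + 1) · 2n - 4n ≤ (4n + 1) · 3 ∑ D`, which forces `2n ≤ 3 ∑ D` since `4n < 4n + 1`. -/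
theorem two_mul_le_three_mul_sum_of_one_le_cyclePotential {D : Fin n → ℕ}
    (h : ∀ r, 1 ≤ cyclePotential D r) : 2 * n ≤ 3 * ∑ v, D v := by
  have hn := NeZero.one_le (n := n)
  have hcov : Ico n (4 * n * n) ⊆
      {p ∈ range ((4 * n + 1) * n) | IsCovered (fun i : ℕ => D i) ((4 * n + 1) * n) p} :=
    fun p hp => by
      rw [mem_Ico] at hp
      exact mem_filter.2 ⟨mem_range.2 (by nlinarith),
        isCovered_of_one_le_cyclePotential D (by omega) (by nlinarith) (h p)⟩
  have h₁ := (card_le_card hcov).trans' (Nat.le_refl _)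
  have h₂ := two_mul_card_isCovered_le ((4 * n + 1) * n) fun i : ℕ => D i
  rw [Nat.card_Ico, sum_range_mul_natCast] at *
  by_contra! hlt
  have h₃ := Nat.mul_le_mul_right (4 * n + 1) (Nat.succ_le_of_lt hlt)
  have h₄ := Nat.sub_add_cancel (show n ≤ 4 * n * n by nlinarith)
  nlinarith

theorem two_mul_le_three_mul_sum_of_solvable_cycleGraph {D : Fin n → ℕ}
    (hD : Solvable (cycleGraph n) D) : 2 * n ≤ 3 * ∑ v, D v :=
  two_mul_le_three_mul_sum_of_one_le_cyclePotential (one_le_cyclePotential_of_solvable hD)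

end Cycle

/-- Two pebbles on every vertex `≡ 1 (mod 3)` of the path, and one on the last vertex when it has
no such neighbour. -/
def optDist (n i : ℕ) : ℕ := if i % 3 = 1 then 2 else if n % 3 = 1 ∧ i + 1 = n then 1 else 0

theorem sum_range_optDist (n m : ℕ) :
    ∑ i ∈ range m, optDist n i = 2 * ((m + 1) / 3) + if n % 3 = 1 ∧ n ≤ m then 1 else 0 := by
  induction m with
  | zero => simp only [range_zero, sum_empty]; split_ifs <;> omega
  | succ m ih =>
    rw [sum_range_succ, ih, optDist]
    split_ifs <;> omega

theorem sum_optDist (n : ℕ) : ∑ v : Fin n, optDist n v = (2 * n + 2) / 3 := by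
  rw [Fin.sum_univ_eq_sum_range (optDist n), sum_range_optDist]
  split_ifs <;> omega

theorem solvable_pathGraph_optDist (n : ℕ) : Solvable (pathGraph n) fun v => optDist n v := by
  intro r
  by_cases hr : 1 ≤ optDist n r
  · exact ⟨[], trivial, hr⟩
  have hr' : r.val % 3 ≠ 1 ∧ ¬(n % 3 = 1 ∧ r.val + 1 = n) := by
    unfold optDist at hr
    split_ifs at hr <;> simp_all
  rcases (by omega : r.val % 3 = 0 ∨ r.val % 3 = 2) with h | h
  · have hlt : r.val + 1 < n := by omega
    exact Reaches.of_adj (u := ⟨r + 1, hlt⟩) (pathGraph_adj.2 (.inr rfl))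
      (by show 2 ≤ optDist n (r + 1); rw [optDist, if_pos (by omega)])
  · have hlt : r.val - 1 < n := by omega
    exact Reaches.of_adj (u := ⟨r - 1, hlt⟩) (pathGraph_adj.2 (.inl (by dsimp only; omega)))
      (by show 2 ≤ optDist n (r - 1); rw [optDist, if_pos (by omega)])

theorem opt_pebbling_path_cycle (n : ℕ) (hn : 3 ≤ n) :
    optPebNum (SimpleGraph.pathGraph n) = (2 * n + 2) / 3 ∧
    optPebNum (SimpleGraph.cycleGraph n) = (2 * n + 2) / 3 := by
  have : NeZero n := ⟨by omega⟩
  have hpath := solvable_pathGraph_optDist n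
  have hlower (D : Fin n → ℕ) (hD : Solvable (cycleGraph n) D) : (2 * n + 2) / 3 ≤ ∑ v, D v := by
    have := two_mul_le_three_mul_sum_of_solvable_cycleGraph hD
    omega
  exact ⟨optPebNum_eq ⟨_, sum_optDist n, hpath⟩ fun D hD =>
      hlower D (hD.mono pathGraph_le_cycleGraph),
    optPebNum_eq ⟨_, sum_optDist n, hpath.mono pathGraph_le_cycleGraph⟩ hlower⟩
end

section
/- The optimal pebbling number of the k-dimensional hypercube Q_k satisfies π_OPT(Q_k) ≥ (4/3)^k. -/
open SimpleGraph

variable {V : Type*}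

/-- The `k`-dimensional hypercube: binary strings of length `k`, adjacent when they
differ in exactly one coordinate. -/
def hypercube (k : ℕ) : SimpleGraph (Fin k → Bool) where
  Adj u v := hammingDist u v = 1
  symm := ⟨fun u v h => by simpa [hammingDist_comm] using h⟩
  loopless := ⟨fun u h => by simp [hammingDist_self] at h⟩

/-!
Give each vertex `v` the weight `2 ^ (-d(v, r))` relative to a target `r`, with `d` the Hamming
distance. A move from `u` to `w` removes weight `2 ω(u)` and adds `ω(w) ≤ 2 ω(u)`, so the total
weight of a distribution never increases; since reaching `r` needs weight `1`, a solvable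
distribution has weight at least `1` relative to each of the `2 ^ k` targets. Summed over all
targets, each pebble contributes `∑_r 2 ^ (-d(v, r)) = (3/2) ^ k`, hence `(3/2) ^ k · |D| ≥ 2 ^ k`.
-/

open Finset

section PebbleWeight

variable [Fintype V] [DecidableEq V]

def pebbleWeight (ω : V → ℚ) (D : V → ℕ) : ℚ :=
  ∑ v, (D v : ℚ) * ω v

theorem pebbleWeight_applyMove (ω : V → ℚ) {D : V → ℕ} {e : V × V} (hne : e.1 ≠ e.2)
    (h2 : 2 ≤ D e.1) :
    pebbleWeight ω (applyMove D e) = pebbleWeight ω D - 2 * ω e.1 + ω e.2 := by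
  have hpt : ∀ v, (applyMove D e v : ℚ) * ω v =
      D v * ω v - 2 * (if e.1 = v then ω v else 0) + (if e.2 = v then ω v else 0) := by
    intro v
    by_cases h1 : e.1 = v
    · subst h1
      simp [applyMove, Ne.symm hne, Nat.cast_sub h2]
      ring
    by_cases h2 : e.2 = v
    · subst h2
      simp [applyMove, hne, Ne.symm hne]
      ring
    simp [applyMove, Ne.symm h1, Ne.symm h2, h1, h2]
  simp only [pebbleWeight, hpt, sum_add_distrib, sum_sub_distrib, ← mul_sum, sum_ite_eq,
    mem_univ, if_true]

theorem pebbleWeight_applySeq_le {G : SimpleGraph V} {ω : V → ℚ}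
    (hω : ∀ u w, G.Adj u w → ω w ≤ 2 * ω u) :
    ∀ {D : V → ℕ} {l : List (V × V)}, ValidSeq G D l →
      pebbleWeight ω (applySeq D l) ≤ pebbleWeight ω D
  | _, [], _ => le_rfl
  | _, _ :: _, ⟨hadj, h2, hl⟩ => by
    have hmove := pebbleWeight_applyMove ω hadj.ne h2
    have hedge := hω _ _ hadj
    exact (pebbleWeight_applySeq_le hω hl).trans (by linarith)

theorem Reaches.mul_le_pebbleWeight {G : SimpleGraph V} {ω : V → ℚ} (hω0 : ∀ v, 0 ≤ ω v)
    (hω : ∀ u w, G.Adj u w → ω w ≤ 2 * ω u) {D : V → ℕ} {r : V} {m : ℕ}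
    (h : Reaches G D r m) : m * ω r ≤ pebbleWeight ω D := by
  obtain ⟨l, hl, hm⟩ := h
  calc (m : ℚ) * ω r ≤ applySeq D l r * ω r :=
        mul_le_mul_of_nonneg_right (by exact_mod_cast hm) (hω0 r)
    _ ≤ pebbleWeight ω (applySeq D l) :=
      single_le_sum (fun v _ => mul_nonneg (Nat.cast_nonneg _) (hω0 v)) (mem_univ r)
    _ ≤ pebbleWeight ω D := pebbleWeight_applySeq_le hω hl

theorem exists_solvable_sum_eq_optPebNum (G : SimpleGraph V) :
    ∃ D : V → ℕ, ∑ v, D v = optPebNum G ∧ Solvable G D :=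
  Nat.sInf_mem (s := {n | ∃ D : V → ℕ, ∑ v, D v = n ∧ Solvable G D})
    ⟨_, fun _ => 1, rfl, fun _ => ⟨[], trivial, le_rfl⟩⟩

theorem card_le_optPebNum_mul {G : SimpleGraph V} (ω : V → V → ℚ) (c : ℚ)
    (hω0 : ∀ r v, 0 ≤ ω r v) (hroot : ∀ r, ω r r = 1)
    (hω : ∀ r u w, G.Adj u w → ω r w ≤ 2 * ω r u) (hsum : ∀ v, ∑ r, ω r v = c) :
    (Fintype.card V : ℚ) ≤ optPebNum G * c := by
  obtain ⟨D, hD, hsolv⟩ := exists_solvable_sum_eq_optPebNum G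
  calc (Fintype.card V : ℚ) = ∑ _r : V, (1 : ℚ) := by simp
    _ ≤ ∑ r, pebbleWeight (ω r) D := sum_le_sum fun r _ => by
      simpa [hroot] using (hsolv r).mul_le_pebbleWeight (hω0 r) (hω r)
    _ = optPebNum G * c := by
      simp only [pebbleWeight]
      rw [sum_comm]
      simp_rw [← mul_sum, hsum, ← sum_mul, ← hD, Nat.cast_sum]

end PebbleWeight

theorem sum_pow_hammingDist {R : Type*} [CommSemiring R] {k : ℕ} (x : R) (v : Fin k → Bool) :
    ∑ r, x ^ hammingDist v r = (1 + x) ^ k := by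
  have hprod : ∀ r : Fin k → Bool, x ^ hammingDist v r = ∏ i, if v i ≠ r i then x else 1 := by
    intro r
    rw [prod_ite, prod_const, prod_const_one, mul_one, hammingDist]
  simp_rw [hprod]
  rw [← Fintype.prod_sum (fun i b => if v i ≠ b then x else 1)]
  have hcoord : ∀ i, (∑ b : Bool, if v i ≠ b then x else 1) = 1 + x := by
    intro i
    cases v i <;> simp [add_comm]
  simp only [hcoord, prod_const, card_univ, Fintype.card_fin]

theorem half_pow_hammingDist_le {k : ℕ} {u w r : Fin k → Bool} (h : hammingDist u w = 1) :
    (1 / 2 : ℚ) ^ hammingDist w r ≤ 2 * (1 / 2) ^ hammingDist u r := by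
  have hdist : hammingDist u r ≤ hammingDist w r + 1 := by
    have := hammingDist_triangle u w r
    omega
  have hanti : (1 / 2 : ℚ) ^ (hammingDist w r + 1) ≤ (1 / 2) ^ hammingDist u r :=
    pow_le_pow_of_le_one (by norm_num) (by norm_num) hdist
  rw [pow_succ] at hanti
  linarith

theorem opt_pebbling_hypercube_lower (k : ℕ) :
    ((4 : ℚ) / 3) ^ k ≤ (optPebNum (hypercube k) : ℚ) := by
  have hbound := card_le_optPebNum_mul (G := hypercube k)
    (fun r v => (1 / 2 : ℚ) ^ hammingDist v r) ((3 / 2) ^ k) (fun _ _ => by positivity)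
    (fun _ => by simp) (fun _ _ _ huw => half_pow_hammingDist_le huw)
    (fun v => by rw [sum_pow_hammingDist]; norm_num)
  have hsplit : (2 : ℚ) ^ k = (4 / 3) ^ k * (3 / 2) ^ k := by rw [← mul_pow]; norm_num
  simp only [Fintype.card_fun, Fintype.card_bool, Fintype.card_fin, Nat.cast_pow,
    Nat.cast_ofNat, hsplit] at hbound
  exact le_of_mul_le_mul_right hbound (by positivity)
end

section
/- Distance domination bound: if every distance-d ball in a connected graph G has at least c vertices, then G has a distance-2d dominating set of size at most n(G)/c. -/
open SimpleGraph

variable {V : Type*}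

theorem distance_domination [Fintype V] [DecidableEq V] (G : SimpleGraph V)
    (hG : G.Connected) (d c : ℕ)
    (hc : ∀ v : V, c ≤ (Finset.univ.filter fun u => G.dist v u ≤ d).card) :
    ∃ S : Finset V, (∀ v : V, ∃ s ∈ S, G.dist s v ≤ 2 * d) ∧
      S.card * c ≤ Fintype.card V := by
  classical
  let P : Finset V → Prop := fun S => ∀ s ∈ S, ∀ t ∈ S, s ≠ t → 2 * d < G.dist s t
  obtain ⟨S, hSmem, hSmax⟩ := Finset.exists_max_image (Finset.univ.filter P) Finset.card
    ⟨∅, by simp [P]⟩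
  have hSP : P S := (Finset.mem_filter.mp hSmem).2
  refine ⟨S, ?_, ?_⟩
  · intro v
    by_contra h
    push_neg at h
    have hvS : v ∉ S := by
      intro hv
      have := h v hv
      simp [G.dist_self] at this
    have hP' : P (insert v S) := by
      intro s hs t ht hst
      rcases Finset.mem_insert.mp hs with hsv | hs'
      · rcases Finset.mem_insert.mp ht with htv | ht'
        · exact absurd (hsv.trans htv.symm) hst
        · rw [hsv]
          have h1 := h t ht'
          have e : G.dist v t = G.dist t v := SimpleGraph.dist_comm
          omega
      · rcases Finset.mem_insert.mp ht with htv | ht'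
        · rw [htv]; exact h s hs'
        · exact hSP s hs' t ht' hst
    have hmem' : insert v S ∈ Finset.univ.filter P :=
      Finset.mem_filter.mpr ⟨Finset.mem_univ _, hP'⟩
    have := hSmax _ hmem'
    rw [Finset.card_insert_of_notMem hvS] at this
    omega
  · let B : V → Finset V := fun s => Finset.univ.filter fun u => G.dist s u ≤ d
    have hdisj : ∀ s ∈ S, ∀ t ∈ S, s ≠ t → Disjoint (B s) (B t) := by
      intro s hs t ht hst
      rw [Finset.disjoint_left]
      intro u hus hut
      have h1 : G.dist s u ≤ d := (Finset.mem_filter.mp hus).2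
      have h2 : G.dist t u ≤ d := (Finset.mem_filter.mp hut).2
      have htri : G.dist s t ≤ G.dist s u + G.dist u t := hG.dist_triangle
      have e : G.dist u t = G.dist t u := SimpleGraph.dist_comm
      have := hSP s hs t ht hst
      omega
    calc S.card * c = ∑ _s ∈ S, c := by rw [Finset.sum_const, smul_eq_mul, mul_comm]
      _ ≤ ∑ s ∈ S, (B s).card := Finset.sum_le_sum fun s _ => hc s
      _ = (S.biUnion B).card := (Finset.card_biUnion hdisj).symm
      _ ≤ Fintype.card V := by
          simpa using Finset.card_le_card (Finset.subset_univ (S.biUnion B))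
end

section
/- If G is a connected graph with minimum degree k, then π_OPT(G) ≤ 4·n(G)/(k+1). -/
open SimpleGraph

variable {V : Type*}

/-- With 4 pebbles on `s` and a walk from `s` to `r` of length at most 2,
`r` is 1-reachable. -/
lemma reaches_of_walk_le_two [DecidableEq V] (G : SimpleGraph V) (D : V → ℕ)
    {s r : V} (h4 : 4 ≤ D s) (p : G.Walk s r) (hp : p.length ≤ 2) :
    Reaches G D r 1 := by
  match p with
  | SimpleGraph.Walk.nil =>
    exact ⟨[], trivial, by simpa [applySeq] using le_trans (by norm_num) h4⟩
  | SimpleGraph.Walk.cons h SimpleGraph.Walk.nil =>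
    refine ⟨[(s, r)], ⟨h, show 2 ≤ D s by omega, trivial⟩, ?_⟩
    have hrs : r ≠ s := (G.ne_of_adj h).symm
    simp [applySeq, applyMove, hrs]
  | SimpleGraph.Walk.cons (v := m) h (SimpleGraph.Walk.cons h' SimpleGraph.Walk.nil) =>
    by_cases hrs : r = s
    · subst hrs
      exact ⟨[], trivial, by simpa [applySeq] using le_trans (by norm_num) h4⟩
    · have hms : m ≠ s := (G.ne_of_adj h).symm
      have hrm : r ≠ m := (G.ne_of_adj h').symm
      refine ⟨[(s, m), (s, m), (m, r)], ⟨h, show 2 ≤ D s by omega, h, ?_, h', ?_, trivial⟩, ?_⟩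
      · show 2 ≤ applyMove D (s, m) s
        have he : applyMove D (s, m) s = D s - 2 := by simp [applyMove]
        omega
      · show 2 ≤ applyMove (applyMove D (s, m)) (s, m) m
        simp [applyMove, hms]
      · show 1 ≤ applyMove (applyMove (applyMove D (s, m)) (s, m)) (m, r) r
        simp [applyMove, hrs, hrm]
  | SimpleGraph.Walk.cons _ (SimpleGraph.Walk.cons _ (SimpleGraph.Walk.cons _ _)) =>
    simp [SimpleGraph.Walk.length_cons] at hp

theorem opt_pebbling_min_degree [Fintype V] [DecidableEq V] (G : SimpleGraph V)
    [DecidableRel G.Adj] (hG : G.Connected) (k : ℕ) (hk : ∀ v : V, k ≤ G.degree v) :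
    (optPebNum G : ℚ) ≤ 4 * (Fintype.card V : ℚ) / (k + 1) := by
  classical
  set P : Finset V → Prop := fun S => ∀ u ∈ S, ∀ v ∈ S, u ≠ v → 3 ≤ G.dist u v with hP
  obtain ⟨S, hSmem, hSmax⟩ :=
    Finset.exists_max_image (Finset.univ.filter P) Finset.card ⟨∅, by simp [hP]⟩
  have hSP : P S := (Finset.mem_filter.mp hSmem).2
  -- every vertex is within distance 2 of S
  have hdom : ∀ r : V, ∃ s ∈ S, G.dist s r ≤ 2 := by
    intro r
    by_contra hcon
    push_neg at hcon
    have hrS : r ∉ S := by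
      intro hrs
      have := hcon r hrs
      simp [SimpleGraph.dist_self] at this
    have hins : P (insert r S) := by
      intro u hu v hv huv
      rcases Finset.mem_insert.mp hu with hu1 | hu1
      · rcases Finset.mem_insert.mp hv with hv1 | hv1
        · exact absurd (hu1.trans hv1.symm) huv
        · subst hu1
          rw [SimpleGraph.dist_comm]
          have := hcon v hv1
          omega
      · rcases Finset.mem_insert.mp hv with hv1 | hv1
        · subst hv1
          have := hcon u hu1
          omega
        · exact hSP u hu1 v hv1 huv
    have : (insert r S).card ≤ S.card :=
      hSmax _ (Finset.mem_filter.mpr ⟨Finset.mem_univ _, hins⟩)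
    rw [Finset.card_insert_of_notMem hrS] at this
    omega
  -- closed neighborhoods of S are pairwise disjoint
  set N : V → Finset V := fun s => insert s (G.neighborFinset s) with hN
  have hmemN : ∀ s w : V, w ∈ N s → G.dist s w ≤ 1 := by
    intro s w hw
    rcases Finset.mem_insert.mp hw with h | h
    · subst h; simp [SimpleGraph.dist_self]
    · have hadj : G.Adj s w := (SimpleGraph.mem_neighborFinset _ _ _).mp h
      simpa using G.dist_le (hadj.toWalk)
  have hdisj : ∀ x ∈ S, ∀ y ∈ S, x ≠ y → Disjoint (N x) (N y) := by
    intro x hx y hy hxy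
    rw [Finset.disjoint_left]
    intro w hwx hwy
    have h1 := hmemN x w hwx
    have h2 := hmemN y w hwy
    have h3 := hSP x hx y hy hxy
    have h4 : G.dist x y ≤ G.dist x w + G.dist w y := hG.dist_triangle
    have h5 : G.dist w y = G.dist y w := SimpleGraph.dist_comm
    omega
  -- counting
  have hcount : S.card * (k + 1) ≤ Fintype.card V := by
    have h1 : (S.biUnion N).card = ∑ s ∈ S, (N s).card := Finset.card_biUnion hdisj
    have h2 : (S.biUnion N).card ≤ Fintype.card V := Finset.card_le_univ _
    have h3 : ∀ s ∈ S, k + 1 ≤ (N s).card := by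
      intro s _
      have : (N s).card = G.degree s + 1 := by
        rw [hN]
        simp only
        rw [Finset.card_insert_of_notMem (SimpleGraph.notMem_neighborFinset_self G s)]
        simp [SimpleGraph.card_neighborFinset_eq_degree]
      rw [this]
      have := hk s
      omega
    calc S.card * (k + 1) ≤ ∑ s ∈ S, (N s).card := by
          simpa [mul_comm] using Finset.card_nsmul_le_sum S (fun s => (N s).card) (k + 1) h3
      _ ≤ Fintype.card V := h1 ▸ h2
  -- the distribution
  set D : V → ℕ := fun v => if v ∈ S then 4 else 0 with hD
  have hsum : (∑ v, D v) = 4 * S.card := by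
    rw [hD]
    simp only
    rw [Finset.sum_ite_mem, Finset.univ_inter, Finset.sum_const, smul_eq_mul]
    ring
  have hsolv : Solvable G D := by
    intro r
    obtain ⟨s, hs, hd⟩ := hdom r
    obtain ⟨p, hp⟩ := (hG.preconnected s r).exists_walk_length_eq_dist
    have h4 : 4 ≤ D s := by simp [hD, hs]
    exact reaches_of_walk_le_two G D h4 p (by omega)
  have hopt : optPebNum G ≤ 4 * S.card :=
    Nat.sInf_le ⟨D, hsum, hsolv⟩
  -- conclude over ℚ
  have hkpos : (0 : ℚ) < (k : ℚ) + 1 := by positivity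
  rw [le_div_iff₀ hkpos]
  have h1 : (optPebNum G : ℚ) ≤ 4 * (S.card : ℚ) := by exact_mod_cast hopt
  have h2 : (S.card : ℚ) * ((k : ℚ) + 1) ≤ (Fintype.card V : ℚ) := by exact_mod_cast hcount
  nlinarith [h1, h2, hkpos]
end

section
/- Collapsing Lemma: if a graph H is obtained from a graph G by collapsing vertex sets (replacing each set S of a partition of V(G) by a single vertex adjacent to all vertices outside S that had a neighbor in S), then π_OPT(G) ≥ π_OPT(H). -/
open SimpleGraph

variable {V : Type*}

set_option linter.unusedSectionVars false

section Aux

variable {W : Type*} [Fintype V] [DecidableEq V] [Fintype W] [DecidableEq W]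

def push (f : V → W) (D : V → ℕ) : W → ℕ :=
  fun w => ∑ v ∈ Finset.univ.filter (fun v => f v = w), D v

lemma push_sum (f : V → W) (D : V → ℕ) : ∑ w, push f D w = ∑ v, D v := by
  simpa [push] using Finset.sum_fiberwise Finset.univ f D

lemma le_push (f : V → W) (D : V → ℕ) (v : V) : D v ≤ push f D (f v) := by
  apply Finset.single_le_sum (f := D) (fun _ _ => Nat.zero_le _)
  simp

lemma applyMove_mono (D D' : V → ℕ) (e : V × V) (h : ∀ v, D v ≤ D' v) :
    ∀ v, applyMove D e v ≤ applyMove D' e v := by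
  intro v
  unfold applyMove
  split_ifs <;> [exact Nat.sub_le_sub_right (h v) 2; exact Nat.add_le_add_right (h v) 1;
    exact h v]

lemma push_applyMove_same (f : V → W) (D : V → ℕ) (e : V × V)
    (hne : e.1 ≠ e.2) (hfe : f e.1 = f e.2) (h2 : 2 ≤ D e.1) :
    ∀ w, push f (applyMove D e) w ≤ push f D w := by
  intro w
  unfold push
  by_cases hw : f e.1 = w
  · have h1 : e.1 ∈ Finset.univ.filter (fun v => f v = w) := by simp [hw]
    have h2' : e.2 ∈ (Finset.univ.filter (fun v => f v = w)).erase e.1 := by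
      simp [hfe ▸ hw, hne.symm]
    rw [← Finset.add_sum_erase _ _ h1, ← Finset.add_sum_erase _ _ h1,
      ← Finset.add_sum_erase _ _ h2', ← Finset.add_sum_erase _ _ h2']
    have hrest : ∑ v ∈ ((Finset.univ.filter (fun v => f v = w)).erase e.1).erase e.2,
        applyMove D e v = ∑ v ∈ ((Finset.univ.filter (fun v => f v = w)).erase e.1).erase e.2,
        D v := by
      apply Finset.sum_congr rfl
      intro v hv
      simp only [Finset.mem_erase] at hv
      simp [applyMove, hv.1, hv.2.1]
    rw [hrest]
    have hA : applyMove D e e.1 = D e.1 - 2 := by simp [applyMove]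
    have hB : applyMove D e e.2 = D e.2 + 1 := by simp [applyMove, hne.symm]
    rw [hA, hB]
    omega
  · apply le_of_eq
    apply Finset.sum_congr rfl
    intro v hv
    simp only [Finset.mem_filter] at hv
    have h1 : v ≠ e.1 := by rintro rfl; exact hw hv.2
    have h2' : v ≠ e.2 := by rintro rfl; exact hw (hfe.trans hv.2)
    simp [applyMove, h1, h2']

lemma push_applyMove_diff (f : V → W) (D : V → ℕ) (e : V × V)
    (hfe : f e.1 ≠ f e.2) (h2 : 2 ≤ D e.1) :
    ∀ w, push f (applyMove D e) w ≤ applyMove (push f D) (f e.1, f e.2) w := by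
  intro w
  unfold push applyMove
  by_cases hw1 : w = f e.1
  · simp only [hw1, if_pos rfl]
    subst hw1
    have h1 : e.1 ∈ Finset.univ.filter (fun v => f v = f e.1) := by simp
    rw [← Finset.add_sum_erase _ _ h1, ← Finset.add_sum_erase _ _ h1]
    have hrest : ∑ v ∈ (Finset.univ.filter (fun v => f v = f e.1)).erase e.1,
        (if v = e.1 then D v - 2 else if v = e.2 then D v + 1 else D v)
        = ∑ v ∈ (Finset.univ.filter (fun v => f v = f e.1)).erase e.1, D v := by
      apply Finset.sum_congr rfl
      intro v hv
      simp only [Finset.mem_erase, Finset.mem_filter] at hv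
      have h2' : v ≠ e.2 := by rintro rfl; exact hfe hv.2.2.symm
      simp [hv.1, h2']
    rw [hrest, if_pos rfl]
    simp only [ite_true]
    omega
  · simp only [if_neg hw1]
    by_cases hw2 : w = f e.2
    · simp only [if_pos hw2]
      subst hw2
      have h1 : e.2 ∈ Finset.univ.filter (fun v => f v = f e.2) := by simp
      rw [← Finset.add_sum_erase _ _ h1, ← Finset.add_sum_erase _ _ h1]
      have hne : e.2 ≠ e.1 := by rintro h; exact hfe (h ▸ rfl)
      have hrest : ∑ v ∈ (Finset.univ.filter (fun v => f v = f e.2)).erase e.2,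
          (if v = e.1 then D v - 2 else if v = e.2 then D v + 1 else D v)
          = ∑ v ∈ (Finset.univ.filter (fun v => f v = f e.2)).erase e.2, D v := by
        apply Finset.sum_congr rfl
        intro v hv
        simp only [Finset.mem_erase, Finset.mem_filter] at hv
        have h1' : v ≠ e.1 := by rintro rfl; exact hfe hv.2.2
        simp [hv.1, h1']
      rw [hrest, if_neg hne, if_pos rfl]
      omega
    · simp only [if_neg hw2]
      apply le_of_eq
      apply Finset.sum_congr rfl
      intro v hv
      simp only [Finset.mem_filter] at hv
      have h1 : v ≠ e.1 := by rintro rfl; exact hw1 hv.2.symm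
      have h2' : v ≠ e.2 := by rintro rfl; exact hw2 hv.2.symm
      simp [h1, h2']

lemma sim (G : SimpleGraph V) (H : SimpleGraph W) (f : V → W)
    (hH : ∀ x y : W, H.Adj x y ↔ x ≠ y ∧ ∃ u v : V, G.Adj u v ∧ f u = x ∧ f v = y) :
    ∀ (l : List (V × V)) (D : V → ℕ) (D' : W → ℕ), ValidSeq G D l →
      (∀ w, push f D w ≤ D' w) →
      ∃ l', ValidSeq H D' l' ∧ ∀ w, push f (applySeq D l) w ≤ applySeq D' l' w := by
  intro l
  induction l with
  | nil => intro D D' _ hle; exact ⟨[], trivial, hle⟩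
  | cons e l ih =>
    intro D D' hv hle
    obtain ⟨hadj, h2, hv'⟩ := hv
    by_cases hfe : f e.1 = f e.2
    · have hstep : ∀ w, push f (applyMove D e) w ≤ D' w := fun w =>
        le_trans (push_applyMove_same f D e hadj.ne hfe h2 w) (hle w)
      exact ih (applyMove D e) D' hv' hstep
    · have hHadj : H.Adj (f e.1) (f e.2) := by
        rw [hH]; exact ⟨hfe, e.1, e.2, hadj, rfl, rfl⟩
      have h2' : 2 ≤ D' (f e.1) := le_trans (le_trans h2 (le_push f D e.1)) (hle (f e.1))
      have hstep : ∀ w, push f (applyMove D e) w ≤ applyMove D' (f e.1, f e.2) w := by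
        intro w
        exact le_trans (push_applyMove_diff f D e hfe h2 w)
          (applyMove_mono _ _ _ hle w)
      obtain ⟨l', hl'v, hl'le⟩ := ih (applyMove D e) (applyMove D' (f e.1, f e.2)) hv' hstep
      exact ⟨(f e.1, f e.2) :: l', ⟨hHadj, h2', hl'v⟩, hl'le⟩

end Aux

theorem collapsing_lemma {W : Type*} [Fintype V] [DecidableEq V]
    [Fintype W] [DecidableEq W] (G : SimpleGraph V) (H : SimpleGraph W)
    (f : V → W) (hf : Function.Surjective f)
    (hH : ∀ x y : W, H.Adj x y ↔ x ≠ y ∧ ∃ u v : V, G.Adj u v ∧ f u = x ∧ f v = y) :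
    optPebNum H ≤ optPebNum G := by
  unfold optPebNum
  have hne : {k : ℕ | ∃ D : V → ℕ, (∑ v, D v) = k ∧ Solvable G D}.Nonempty := by
    refine ⟨∑ _v : V, 1, fun _ => 1, rfl, fun r => ⟨[], trivial, le_refl 1⟩⟩
  obtain ⟨D, hsum, hsolv⟩ := Nat.sInf_mem hne
  apply Nat.sInf_le
  refine ⟨push f D, by rw [push_sum]; exact hsum, ?_⟩
  intro r'
  obtain ⟨r, rfl⟩ := hf r'
  obtain ⟨l, hl, h1⟩ := hsolv r
  obtain ⟨l', hv', hle⟩ := sim G H f hH l D (push f D) hl (fun w => le_rfl)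
  exact ⟨l', hv', le_trans (le_trans h1 (le_push f (applySeq D l) r)) (hle (f r))⟩
end
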